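/- arXiv:1011.3370 — 7 statements merged into one kernel-verified Lean document; each statement's English description precedes it below -/
import Mathlib

section
/- Let (w_n) be a sequence of non-negative reals and α ∈ ℝ. Suppose there are constants A, B > 0 such that A·x·(log x)^{-α} ≤ ∑_{n ≤ x} w_n ≤ B·x·(log x)^{-α} for all x ≥ 2. Then for σ ∈ (1/2, 1), the sum ∑_{n≥1} w_n n^{-2σ} is comparable (up to positive multiplicative constants independent of σ) to ∑_{n≥2} n^{-2σ} (log n)^{-α}. -/
/-!
Summation by parts turns `∑ w (n + 1) (n + 1) ^ (-s)` into `∑ W(N) (N ^ (-s) - (N + 1) ^ (-s))`,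
where `W(N) = ∑_{1 ≤ n ≤ N} w n`. For `1 ≤ s ≤ 2` the difference `N ^ (-s) - (N + 1) ^ (-s)` lies
between `N ^ (-s) / (2N)` and `2 N ^ (-s) / N`, with constants independent of `s`, so the Chebyshev
bounds `W(N) ≍ N (log N) ^ (-α)` make the `N`-th term comparable to `N ^ (-s) (log N) ^ (-α)`.
-/

open Real Filter Topology Finset Asymptotics

theorem Antitone.hasSum_ite_sub_add_one {b : ℕ → ℝ} (hb : Antitone b)
    (hlim : Tendsto b atTop (𝓝 0)) (n : ℕ) :
    HasSum (fun m => if n ≤ m then b m - b (m + 1) else 0) (b n) := by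
  rw [← hasSum_nat_add_iff' n]
  have hshift : HasSum (fun m => b (m + n) - b (m + 1 + n)) (b n) := by
    rw [hasSum_iff_tendsto_nat_of_nonneg fun m => sub_nonneg.2 (hb (by omega))]
    have := (tendsto_const_nhds (x := b n)).sub (hlim.comp (tendsto_add_atTop_nat n))
    rw [sub_zero] at this
    refine this.congr fun N => ?_
    rw [sum_range_sub' (fun m => b (m + n)) N, zero_add]
    rfl
  have hhead : ∑ i ∈ range n, (if n ≤ i then b i - b (i + 1) else 0) = 0 :=
    sum_eq_zero fun i hi => if_neg (by simpa using hi)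
  simpa [hhead, add_right_comm _ 1 n] using hshift

/-- Working in `ℝ≥0∞` lets the two sums be interchanged without any summability hypothesis. -/
theorem Antitone.tsum_ofReal_mul_eq_tsum_ofReal_sum_range_mul_sub {a b : ℕ → ℝ}
    (ha : ∀ n, 0 ≤ a n) (hb : Antitone b) (hlim : Tendsto b atTop (𝓝 0)) :
    ∑' n, ENNReal.ofReal (a n * b n) =
      ∑' m, ENNReal.ofReal ((∑ k ∈ range (m + 1), a k) * (b m - b (m + 1))) := by
  have hd (m : ℕ) : 0 ≤ b m - b (m + 1) := sub_nonneg.2 (hb (Nat.le_succ m))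
  have htel (n : ℕ) : ENNReal.ofReal (b n) =
      ∑' m, if n ≤ m then ENNReal.ofReal (b m - b (m + 1)) else 0 := by
    have h := hb.hasSum_ite_sub_add_one hlim n
    rw [← h.tsum_eq, ENNReal.ofReal_tsum_of_nonneg (fun m => by split_ifs <;> simp [hd]) h.summable]
    exact tsum_congr fun m => by split_ifs <;> simp
  calc ∑' n, ENNReal.ofReal (a n * b n)
      = ∑' n, ∑' m, if n ≤ m then ENNReal.ofReal (a n) * ENNReal.ofReal (b m - b (m + 1))
          else 0 := by
        refine tsum_congr fun n => ?_
        rw [ENNReal.ofReal_mul (ha n), htel, ← ENNReal.tsum_mul_left]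
        exact tsum_congr fun m => by split_ifs <;> simp
    _ = ∑' m, ∑' n, if n ≤ m then ENNReal.ofReal (a n) * ENNReal.ofReal (b m - b (m + 1))
          else 0 := ENNReal.tsum_comm
    _ = _ := by
        refine tsum_congr fun m => ?_
        rw [tsum_eq_sum (s := range (m + 1)) fun n hn => if_neg (by simpa using hn),
          ← sum_filter, ← sum_mul, ← ENNReal.ofReal_sum_of_nonneg fun k _ => ha k,
          ← ENNReal.ofReal_mul (sum_nonneg fun k _ => ha k)]
        congr 3
        ext n
        simp

theorem Antitone.hasSum_mul_of_summable_by_parts {a b : ℕ → ℝ} (ha : ∀ n, 0 ≤ a n)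
    (hb : Antitone b) (hlim : Tendsto b atTop (𝓝 0))
    (hs : Summable fun m => (∑ k ∈ range (m + 1), a k) * (b m - b (m + 1))) :
    HasSum (fun n => a n * b n) (∑' m, (∑ k ∈ range (m + 1), a k) * (b m - b (m + 1))) := by
  have hf (n : ℕ) : 0 ≤ a n * b n := mul_nonneg (ha n) (hb.le_of_tendsto hlim n)
  have hT (m : ℕ) : 0 ≤ (∑ k ∈ range (m + 1), a k) * (b m - b (m + 1)) :=
    mul_nonneg (sum_nonneg fun k _ => ha k) (sub_nonneg.2 (hb (Nat.le_succ m)))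
  have heq := hb.tsum_ofReal_mul_eq_tsum_ofReal_sum_range_mul_sub ha hlim
  rw [← ENNReal.ofReal_tsum_of_nonneg hT hs] at heq
  have hfs : Summable fun n => a n * b n :=
    (ENNReal.summable_toReal (heq ▸ ENNReal.ofReal_ne_top)).congr fun n =>
      ENNReal.toReal_ofReal (hf n)
  rw [← ENNReal.ofReal_tsum_of_nonneg hf hfs,
    ENNReal.ofReal_eq_ofReal_iff (tsum_nonneg hf) (tsum_nonneg hT)] at heq
  exact heq ▸ hfs.hasSum

theorem summable_nat_rpow_neg_mul_log_rpow {s : ℝ} (hs : 1 < s) (β : ℝ) :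
    Summable fun n : ℕ => (n : ℝ) ^ (-s) * log n ^ β := by
  obtain ⟨ε, hε0, hε⟩ : ∃ ε : ℝ, 0 < ε ∧ -s + ε < -1 := ⟨(s - 1) / 2, by linarith, by linarith⟩
  have hlog : (fun x : ℝ => x ^ (-s) * log x ^ β) =O[atTop] fun x => x ^ (-s) * x ^ ε :=
    (isBigO_refl _ _).mul (isLittleO_log_rpow_rpow_atTop β hε0).isBigO
  refine summable_of_isBigO_nat (summable_nat_rpow.2 hε)
    ((hlog.comp_tendsto tendsto_natCast_atTop_atTop).trans (isBigO_of_le _ fun n => ?_))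
  rcases Nat.eq_zero_or_pos n with rfl | hn
  · simp [zero_rpow (by linarith : -s ≠ 0), zero_rpow hε0.ne']
  · simp [← rpow_add (Nat.cast_pos.2 hn)]

theorem summable_rpow_neg_mul_log_rpow_add_two {s : ℝ} (hs : 1 < s) (β : ℝ) :
    Summable fun n : ℕ => ((n : ℝ) + 2) ^ (-s) * log ((n : ℝ) + 2) ^ β := by
  simpa using (summable_nat_add_iff 2).2 (summable_nat_rpow_neg_mul_log_rpow hs β)

theorem rpow_neg_sub_rpow_neg_add_one_bounds {x s : ℝ} (hx : 1 ≤ x) (hs1 : 1 ≤ s) (hs2 : s ≤ 2) :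
    x ^ (-s) / (2 * x) ≤ x ^ (-s) - (x + 1) ^ (-s) ∧
      x ^ (-s) - (x + 1) ^ (-s) ≤ 2 * x ^ (-s) / x := by
  have hx0 : 0 < x := by linarith
  set r := x / (x + 1)
  have hr0 : 0 < r := by positivity
  have hr1 : r ≤ 1 := (div_le_one (by linarith)).2 (by linarith)
  have hpow : (x + 1) ^ (-s) = x ^ (-s) * r ^ s := by
    rw [div_rpow hx0.le (by linarith), rpow_neg hx0.le, rpow_neg (by linarith)]
    field_simp
  -- `r ^ 2 ≤ r ^ s ≤ r` squeezes `1 - r ^ s` between `1 - r` and `(1 - r)(1 + r) ≤ 2 (1 - r)`.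
  have hup : r ^ s ≤ r := by simpa using rpow_le_rpow_of_exponent_ge hr0 hr1 hs1
  have hlo : r ^ 2 ≤ r ^ s := by simpa using rpow_le_rpow_of_exponent_ge hr0 hr1 hs2
  have hone : 1 - r = 1 / (x + 1) := by simp only [r]; field_simp; ring
  constructor
  · calc x ^ (-s) / (2 * x) ≤ x ^ (-s) * (1 - r) := by
          rw [hone, mul_one_div]; gcongr; linarith
      _ ≤ x ^ (-s) * (1 - r ^ s) := by gcongr
      _ = x ^ (-s) - (x + 1) ^ (-s) := by rw [hpow]; ring
  · calc x ^ (-s) - (x + 1) ^ (-s) = x ^ (-s) * (1 - r ^ s) := by rw [hpow]; ring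
      _ ≤ x ^ (-s) * (2 * (1 - r)) := by gcongr; nlinarith
      _ ≤ 2 * x ^ (-s) / x := by
          rw [hone, mul_one_div, ← mul_div_assoc, mul_comm]; gcongr; linarith

theorem summable_and_tsum_bounds_of_succ {T g : ℕ → ℝ} {c C D : ℝ} (hc : 0 ≤ c) (hD : 0 ≤ D)
    (hg : Summable g) (hg0 : ∀ n, 0 ≤ g n) (hT0 : 0 ≤ T 0)
    (hsucc : ∀ n, c * g n ≤ T (n + 1) ∧ T (n + 1) ≤ C * g n) (hzero : T 0 ≤ D * g 0) :
    Summable T ∧ c * ∑' n, g n ≤ ∑' n, T n ∧ ∑' n, T n ≤ (D + C) * ∑' n, g n := by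
  have hTsucc : Summable fun n => T (n + 1) :=
    .of_nonneg_of_le (fun n => (mul_nonneg hc (hg0 n)).trans (hsucc n).1) (fun n => (hsucc n).2)
      (hg.mul_left C)
  have hT : Summable T := (summable_nat_add_iff 1).1 hTsucc
  refine ⟨hT, ?_, ?_⟩
  · calc c * ∑' n, g n = ∑' n, c * g n := (hg.tsum_mul_left c).symm
      _ ≤ ∑' n, T (n + 1) := (hg.mul_left c).tsum_le_tsum (fun n => (hsucc n).1) hTsucc
      _ ≤ ∑' n, T n := by rw [hT.tsum_eq_zero_add]; linarith
  · calc ∑' n, T n = T 0 + ∑' n, T (n + 1) := hT.tsum_eq_zero_add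
      _ ≤ D * g 0 + ∑' n, C * g n :=
          add_le_add hzero (hTsucc.tsum_le_tsum (fun n => (hsucc n).2) (hg.mul_left C))
      _ ≤ D * ∑' n, g n + C * ∑' n, g n := by
          rw [hg.tsum_mul_left C]
          gcongr
          exact hg.le_tsum 0 fun n _ => hg0 n
      _ = (D + C) * ∑' n, g n := by ring

theorem sum_filter_one_le_range_add_one (w : ℕ → ℝ) (N : ℕ) :
    ∑ n ∈ (range (N + 1)).filter (fun n => 1 ≤ n), w n = ∑ k ∈ range N, w (k + 1) := by
  rw [sum_filter, sum_range_succ']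
  simp

/-- The `m`-th term of `∑ w (n + 1) (n + 1) ^ (-s)` after summation by parts. The cast of `m + 1`
makes it literally the summand of `Antitone.hasSum_mul_of_summable_by_parts` for
`b n = (n + 1) ^ (-s)`. -/
noncomputable def abelTerm (w : ℕ → ℝ) (s : ℝ) (m : ℕ) : ℝ :=
  (∑ k ∈ range (m + 1), w (k + 1)) * (((m : ℝ) + 1) ^ (-s) - (((m + 1 : ℕ) : ℝ) + 1) ^ (-s))

def HasChebyshevBounds (w : ℕ → ℝ) (α A B : ℝ) : Prop :=
  ∀ N : ℕ, 2 ≤ N → A * N * log N ^ (-α) ≤ ∑ k ∈ range N, w (k + 1) ∧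
    ∑ k ∈ range N, w (k + 1) ≤ B * N * log N ^ (-α)

section Chebyshev

variable {w : ℕ → ℝ} {α A B s : ℝ}

theorem abelTerm_nonneg (hw : ∀ n, 0 ≤ w n) (hs : 0 ≤ s) (m : ℕ) : 0 ≤ abelTerm w s m :=
  mul_nonneg (sum_nonneg fun k _ => hw (k + 1)) <| sub_nonneg.2 <|
    rpow_le_rpow_of_nonpos (by positivity) (by push_cast; linarith) (neg_nonpos.2 hs)

theorem HasChebyshevBounds.abelTerm_succ_bounds (hcheb : HasChebyshevBounds w α A B)
    (hA : 0 ≤ A) (hs1 : 1 ≤ s) (hs2 : s ≤ 2) (n : ℕ) :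
    A / 2 * (((n : ℝ) + 2) ^ (-s) * log ((n : ℝ) + 2) ^ (-α)) ≤ abelTerm w s (n + 1) ∧
      abelTerm w s (n + 1) ≤ 2 * B * (((n : ℝ) + 2) ^ (-s) * log ((n : ℝ) + 2) ^ (-α)) := by
  obtain ⟨hWlo, hWup⟩ := hcheb (n + 2) (by omega)
  have habel : abelTerm w s (n + 1) =
      (∑ k ∈ range (n + 2), w (k + 1)) * (((n : ℝ) + 2) ^ (-s) - ((n : ℝ) + 2 + 1) ^ (-s)) := by
    simp only [abelTerm]; push_cast; ring_nf
  have hx : (2 : ℝ) ≤ (n : ℝ) + 2 := by linarith [(n.cast_nonneg : (0 : ℝ) ≤ n)]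
  push_cast at hWlo hWup
  rw [habel]
  generalize (n : ℝ) + 2 = x at hx hWlo hWup ⊢
  generalize ∑ k ∈ range (n + 2), w (k + 1) = W at hWlo hWup ⊢
  obtain ⟨hdlo, hdup⟩ := rpow_neg_sub_rpow_neg_add_one_bounds (x := x) (by linarith) hs1 hs2
  have hL : 0 ≤ log x ^ (-α) := rpow_nonneg (log_nonneg (by linarith)) _
  have hAxL : 0 ≤ A * x * log x ^ (-α) := by positivity
  constructor
  · calc A / 2 * (x ^ (-s) * log x ^ (-α)) = A * x * log x ^ (-α) * (x ^ (-s) / (2 * x)) := by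
          field_simp
      _ ≤ W * (x ^ (-s) - (x + 1) ^ (-s)) :=
          mul_le_mul hWlo hdlo (by positivity) (hAxL.trans hWlo)
  · calc W * (x ^ (-s) - (x + 1) ^ (-s)) ≤ B * x * log x ^ (-α) * (2 * x ^ (-s) / x) :=
          mul_le_mul hWup hdup ((by positivity : (0 : ℝ) ≤ x ^ (-s) / (2 * x)).trans hdlo)
            (hAxL.trans (hWlo.trans hWup))
      _ = 2 * B * (x ^ (-s) * log x ^ (-α)) := by field_simp

theorem HasChebyshevBounds.abelTerm_zero_le (hcheb : HasChebyshevBounds w α A B)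
    (hw : ∀ n, 0 ≤ w n) (hB : 0 ≤ B) (hs2 : s ≤ 2) :
    abelTerm w s 0 ≤ 8 * B * ((2 : ℝ) ^ (-s) * log 2 ^ (-α)) := by
  have hW2 : w 1 + w 2 ≤ B * 2 * log 2 ^ (-α) := by
    simpa [sum_range_succ] using (hcheb 2 le_rfl).2
  have hquarter : 1 / 4 ≤ (2 : ℝ) ^ (-s) := by
    calc (1 / 4 : ℝ) = 2 ^ (-2 : ℝ) := by norm_num
      _ ≤ 2 ^ (-s) := rpow_le_rpow_of_exponent_le one_le_two (by linarith)
  have hL : 0 ≤ log 2 ^ (-α) := rpow_nonneg (log_nonneg one_le_two) _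
  calc abelTerm w s 0 = w 1 * (1 - 2 ^ (-s)) := by norm_num [abelTerm]
    _ ≤ w 1 + w 2 := by nlinarith [hw 1, hw 2, rpow_nonneg zero_le_two (-s)]
    _ ≤ 8 * B * (1 / 4 * log 2 ^ (-α)) := by linarith
    _ ≤ 8 * B * (2 ^ (-s) * log 2 ^ (-α)) := by gcongr

end Chebyshev

/-- If the partial sums of `w` satisfy two-sided Chebyshev bounds with exponent `α`,
then `∑ w n · n^{-2σ}` is comparable, uniformly for `σ ∈ (1/2,1)`, to the
zeta-type sum `∑_{n ≥ 2} n^{-2σ} (log n)^{-α}`. -/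
theorem stmt_2 (w : ℕ → ℝ) (hw : ∀ n, 0 ≤ w n) (α : ℝ) (A B : ℝ) (hA : 0 < A) (hB : 0 < B)
    (hcheb : ∀ x : ℝ, 2 ≤ x →
      A * x * Real.log x ^ (-α) ≤
          ∑ n ∈ (Finset.range (⌊x⌋₊ + 1)).filter (fun n : ℕ => 1 ≤ n), w n ∧
        ∑ n ∈ (Finset.range (⌊x⌋₊ + 1)).filter (fun n : ℕ => 1 ≤ n), w n
          ≤ B * x * Real.log x ^ (-α)) :
    ∃ c C : ℝ, 0 < c ∧ 0 < C ∧ ∀ σ : ℝ, σ ∈ Set.Ioo (1/2 : ℝ) 1 →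
      c * (∑' n : ℕ, ((n + 2 : ℝ) ^ (-(2 * σ)) * Real.log (n + 2) ^ (-α)))
          ≤ ∑' n : ℕ, w (n + 1) * ((n + 1 : ℝ) ^ (-(2 * σ))) ∧
        (∑' n : ℕ, w (n + 1) * ((n + 1 : ℝ) ^ (-(2 * σ))))
          ≤ C * ∑' n : ℕ, ((n + 2 : ℝ) ^ (-(2 * σ)) * Real.log (n + 2) ^ (-α)) := by
  have hcheb' : HasChebyshevBounds w α A B := fun N hN => by
    simpa [sum_filter_one_le_range_add_one] using hcheb N (by exact_mod_cast hN)
  refine ⟨A / 2, 8 * B + 2 * B, by positivity, by positivity, fun σ ⟨hσ1, hσ2⟩ => ?_⟩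
  have hs1 : 1 ≤ 2 * σ := by linarith
  have hs2 : 2 * σ ≤ 2 := by linarith
  have hg (n : ℕ) : 0 ≤ ((n : ℝ) + 2) ^ (-(2 * σ)) * log ((n : ℝ) + 2) ^ (-α) :=
    mul_nonneg (by positivity) (rpow_nonneg (log_nonneg (by norm_cast; omega)) _)
  obtain ⟨hT, hlo, hup⟩ := summable_and_tsum_bounds_of_succ (T := abelTerm w (2 * σ))
    (c := A / 2) (C := 2 * B) (D := 8 * B) (by positivity) (by positivity)
    (summable_rpow_neg_mul_log_rpow_add_two (by linarith) (-α)) hg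
    (abelTerm_nonneg hw (by linarith) 0) (hcheb'.abelTerm_succ_bounds hA.le hs1 hs2)
    (by simpa using hcheb'.abelTerm_zero_le hw hB.le hs2)
  have hb : Antitone fun n : ℕ => ((n : ℝ) + 1) ^ (-(2 * σ)) := fun m n hmn =>
    rpow_le_rpow_of_nonpos (by positivity) (by gcongr) (by linarith)
  have hb0 : Tendsto (fun n : ℕ => ((n : ℝ) + 1) ^ (-(2 * σ))) atTop (𝓝 0) :=
    (tendsto_rpow_neg_atTop (by linarith)).comp
      (tendsto_atTop_add_const_right _ 1 tendsto_natCast_atTop_atTop)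
  rw [(hb.hasSum_mul_of_summable_by_parts (fun n => hw (n + 1)) hb0 hT).tsum_eq]
  exact ⟨hlo, hup⟩
end

section
/- Let Λ(n) be the von Mangoldt function. If the Chebyshev asymptotic ∑_{n ≤ x} Λ(n) ∼ x holds as x → ∞, then the weights w_n = Λ(n)/log n (for n ≥ 2, with w_1 = 0) satisfy ∑_{n ≤ x} w_n ∼ x / log x as x → ∞. -/
/-!
Split `∑_{n ≤ x} a n / log n` at `y = x / log² x`. Below `y` the terms are at most `a n / log 2`,
so that part is `O(y) = o(x / log x)`; above `y` one has `log n ≥ log y = (1 + o(1)) log x`, while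
`log n ≤ log x` throughout gives the matching lower bound.
-/

open Finset Real Filter

open scoped Topology ArithmeticFunction.vonMangoldt

section SumDivLog

variable {a : ℕ → ℝ}

theorem sum_div_log_le_sum_div_log (ha : 0 ≤ a) (ha₁ : a 1 = 0) {x : ℝ} (hx : 0 ≤ x) :
    (∑ n ∈ Icc 1 ⌊x⌋₊, a n) / log x ≤ ∑ n ∈ Icc 1 ⌊x⌋₊, a n / log n := by
  rw [sum_div]
  refine sum_le_sum fun n hn => ?_
  obtain ⟨hn₁, hnx⟩ := mem_Icc.1 hn
  obtain rfl | hn₂ := hn₁.eq_or_lt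
  · simp [ha₁]
  have hlog : 0 < log n := log_pos (by exact_mod_cast hn₂)
  exact div_le_div_of_nonneg_left (ha n) hlog
    (log_le_log (by positivity) ((Nat.cast_le.2 hnx).trans (Nat.floor_le hx)))

theorem sum_div_log_le_split (ha : 0 ≤ a) {x y : ℝ} (hy : 2 ≤ y) (hyx : y ≤ x) :
    ∑ n ∈ Icc 1 ⌊x⌋₊, a n / log n ≤
      (∑ n ∈ Icc 1 ⌊y⌋₊, a n) / log 2 + (∑ n ∈ Icc 1 ⌊x⌋₊, a n) / log y := by
  have hfloor : ⌊y⌋₊ ≤ ⌊x⌋₊ := Nat.floor_le_floor hyx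
  have hIcc : ∀ m, Icc 1 m = Ioc 0 m := fun m => by ext; simp; omega
  have hlow : ∑ n ∈ Icc 1 ⌊y⌋₊, a n / log n ≤ (∑ n ∈ Icc 1 ⌊y⌋₊, a n) / log 2 := by
    rw [sum_div]
    refine sum_le_sum fun n hn => ?_
    obtain rfl | hn₂ := (mem_Icc.1 hn).1.eq_or_lt
    · simpa using div_nonneg (ha 1) (log_nonneg one_le_two)
    exact div_le_div_of_nonneg_left (ha n) (log_pos one_lt_two)
      (log_le_log two_pos (by exact_mod_cast hn₂))
  have hhigh : ∑ n ∈ Ioc ⌊y⌋₊ ⌊x⌋₊, a n / log n ≤ (∑ n ∈ Icc 1 ⌊x⌋₊, a n) / log y := by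
    calc ∑ n ∈ Ioc ⌊y⌋₊ ⌊x⌋₊, a n / log n
        ≤ ∑ n ∈ Ioc ⌊y⌋₊ ⌊x⌋₊, a n / log y := by
          refine sum_le_sum fun n hn => ?_
          have hyn : y ≤ n :=
            (Nat.lt_floor_add_one y).le.trans (by exact_mod_cast (mem_Ioc.1 hn).1)
          exact div_le_div_of_nonneg_left (ha n) (log_pos (by linarith))
            (log_le_log (by linarith) hyn)
      _ ≤ (∑ n ∈ Icc 1 ⌊x⌋₊, a n) / log y := by
          rw [← sum_div, hIcc]
          exact div_le_div_of_nonneg_right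
            (sum_le_sum_of_subset_of_nonneg (Ioc_subset_Ioc_left (Nat.zero_le _))
              fun n _ _ => ha n) (log_nonneg (by linarith))
  rw [hIcc, ← sum_Ioc_consecutive _ (Nat.zero_le _) hfloor, ← hIcc]
  exact add_le_add hlow hhigh

end SumDivLog

theorem tendsto_div_log_sq_atTop : Tendsto (fun x : ℝ => x / log x ^ 2) atTop atTop := by
  have h : Tendsto (fun x : ℝ => log x ^ 2 / x) atTop (𝓝[>] 0) := by
    refine tendsto_nhdsWithin_of_tendsto_nhds_of_eventually_within _
      (by simpa using tendsto_pow_log_div_mul_add_atTop 1 0 2 one_ne_zero) ?_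
    filter_upwards [eventually_gt_atTop 1] with x hx
    exact div_pos (pow_pos (log_pos hx) 2) (by linarith)
  exact h.inv_tendsto_nhdsGT_zero.congr fun x => inv_div _ _

theorem tendsto_log_div_log_div_log_sq :
    Tendsto (fun x : ℝ => log x / log (x / log x ^ 2)) atTop (𝓝 1) := by
  have hlog_div : Tendsto (fun t : ℝ => log t / t) atTop (𝓝 0) := by
    simpa using tendsto_pow_log_div_mul_add_atTop 1 0 1 one_ne_zero
  have hloglog : Tendsto (fun x : ℝ => 1 - 2 * (log (log x) / log x)) atTop (𝓝 1) := by
    simpa using tendsto_const_nhds.sub ((hlog_div.comp tendsto_log_atTop).const_mul 2)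
  have hratio : Tendsto (fun x : ℝ => log (x / log x ^ 2) / log x) atTop (𝓝 1) := by
    refine hloglog.congr' ?_
    filter_upwards [eventually_gt_atTop 1] with x hx
    have hlog : 0 < log x := log_pos hx
    rw [log_div (by linarith) (by positivity), log_pow]
    field_simp
    push_cast
    ring
  simpa only [inv_div, inv_one] using hratio.inv₀ one_ne_zero

theorem tendsto_sum_div_log_div_div_log {a : ℕ → ℝ} {c : ℝ} (ha : 0 ≤ a) (ha₁ : a 1 = 0)
    (hA : Tendsto (fun x : ℝ => (∑ n ∈ Icc 1 ⌊x⌋₊, a n) / x) atTop (𝓝 c)) :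
    Tendsto (fun x : ℝ => (∑ n ∈ Icc 1 ⌊x⌋₊, a n / log n) / (x / log x)) atTop (𝓝 c) := by
  set A : ℝ → ℝ := fun x => ∑ n ∈ Icc 1 ⌊x⌋₊, a n
  set y : ℝ → ℝ := fun x => x / log x ^ 2
  have hinv : Tendsto (fun x : ℝ => 1 / (log x * log 2)) atTop (𝓝 0) :=
    (tendsto_log_atTop.atTop_mul_const (log_pos one_lt_two)).inv_tendsto_atTop.congr
      fun x => (one_div _).symm
  have hupper : Tendsto (fun x => A (y x) / y x * (1 / (log x * log 2))
      + A x / x * (log x / log (y x))) atTop (𝓝 c) := by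
    simpa using ((hA.comp tendsto_div_log_sq_atTop).mul hinv).add
      (hA.mul tendsto_log_div_log_div_log_sq)
  refine tendsto_of_tendsto_of_tendsto_of_le_of_le' hA hupper ?_ ?_
  · filter_upwards [eventually_gt_atTop 1] with x hx
    have hlog : 0 < log x := log_pos hx
    calc A x / x = A x / log x / (x / log x) := by field_simp
      _ ≤ _ := by gcongr; exact sum_div_log_le_sum_div_log ha ha₁ (by linarith)
  · filter_upwards [tendsto_div_log_sq_atTop.eventually_ge_atTop 2, eventually_ge_atTop 3,
      tendsto_log_atTop.eventually_ge_atTop 1] with x hy hx hlog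
    have hyx : y x ≤ x := div_le_self (by linarith) (by nlinarith)
    calc _ ≤ (A (y x) / log 2 + A x / log (y x)) / (x / log x) := by
          gcongr; exact sum_div_log_le_split ha hy hyx
      _ = _ := by
          have : log 2 ≠ 0 := (log_pos one_lt_two).ne'
          simp only [y]
          field_simp

/-- If `ψ(x) = ∑_{n ≤ x} Λ(n) ∼ x`, then the weights `w_n = Λ(n)/log n` (with `w_1 = 0`)
satisfy `∑_{n ≤ x} w_n ∼ x / log x`. -/
theorem stmt_6 (w : ℕ → ℝ)
    (hw : ∀ n : ℕ, w n = if 2 ≤ n then (ArithmeticFunction.vonMangoldt n) / Real.log n else 0)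
    (hψ : Tendsto (fun x : ℝ =>
        (∑ n ∈ Finset.Icc 1 ⌊x⌋₊, (ArithmeticFunction.vonMangoldt n : ℝ)) / x)
      atTop (nhds 1)) :
    Tendsto (fun x : ℝ =>
        (∑ n ∈ Finset.Icc 1 ⌊x⌋₊, w n) / (x / Real.log x)) atTop (nhds 1) := by
  have hΛ := tendsto_sum_div_log_div_div_log (a := fun n => (Λ n : ℝ))
    (fun _ => ArithmeticFunction.vonMangoldt_nonneg) ArithmeticFunction.vonMangoldt_apply_one hψ
  refine hΛ.congr fun x => congrArg (· / _) (sum_congr rfl fun n hn => ?_)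
  -- at `n = 1` both sides vanish, the left one because `log 1 = 0`
  obtain rfl | hn₂ := (mem_Icc.1 hn).1.eq_or_lt
  · simp [hw]
  · rw [hw, if_pos (show 2 ≤ n from hn₂)]
end

section
/- Let F(n) denote the number of ordered factorizations of n into factors ≥ 2 (counting n itself as one factorization for n ≥ 2, and F(1) = 1). Then for real s > ρ₁, where ρ₁ > 1 is the unique real number with ζ(ρ₁) = 2, the Dirichlet series ∑_{n≥1} F(n) n^{-s} converges and equals 1/(2 − ζ(s)). -/
/-!
In the Dirichlet ring, the recurrence says `F = 1 + (ζ - 1) * F`, so `F = ∑ₖ (ζ - 1)^k`, where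
`(ζ - 1)^k n` counts the ordered factorizations of `n` into exactly `k` factors `≥ 2`. All terms
are nonnegative, so the Dirichlet series may be summed in `ℝ≥0∞`, where convolution becomes
multiplication of series and the order of summation is free. The series of `F` is then the
geometric series `∑ₖ (ζ(s) - 1)^k = 1 / (2 - ζ(s))`, which is finite because `ζ` is decreasing and
`ζ(ρ₁) = 2`.
-/

open Finset Real ArithmeticFunction
open scoped ENNReal ArithmeticFunction.zeta

lemma ENNReal.tsum_sum_divisorsAntidiagonal (u : ℕ × ℕ → ℝ≥0∞)
    (hu : ∀ p : ℕ × ℕ, p.1 * p.2 = 0 → u p = 0) :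
    ∑' n : ℕ, ∑ p ∈ n.divisorsAntidiagonal, u p = ∑' p : ℕ × ℕ, u p := by
  rw [← ENNReal.tsum_fiberwise u fun p => p.1 * p.2]
  refine tsum_congr fun n => ?_
  rcases eq_or_ne n 0 with rfl | hn
  · rw [Nat.divisorsAntidiagonal_zero, sum_empty, eq_comm, ENNReal.tsum_eq_zero]
    exact fun p => hu p p.2
  · have hfiber : (fun p : ℕ × ℕ => p.1 * p.2) ⁻¹' {n} = n.divisorsAntidiagonal := by
      ext p
      simp [hn]
    rw [hfiber, Finset.tsum_subtype' n.divisorsAntidiagonal u]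

lemma ENNReal.hasSum_toReal_of_tsum_ofReal {α : Type*} {f : α → ℝ} {a : ℝ≥0∞}
    (hf : ∀ i, 0 ≤ f i) (h : ∑' i, ENNReal.ofReal (f i) = a) (ha : a ≠ ⊤) :
    HasSum f a.toReal := by
  have hsum := ENNReal.hasSum_toReal (h ▸ ha)
  rw [← h, ENNReal.tsum_toReal_eq fun _ => ENNReal.ofReal_ne_top]
  simpa only [ENNReal.toReal_ofReal (hf _)] using hsum

lemma summable_nat_add_one_rpow_neg {s : ℝ} (hs : 1 < s) :
    Summable fun n : ℕ => (n + 1 : ℝ) ^ (-s) := by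
  have := (summable_nat_add_iff 1).2 (Real.summable_nat_rpow.2 (by linarith : -s < -1))
  simpa using this

lemma tsum_nat_add_one_rpow_neg_lt {σ s : ℝ} (hσ : 1 < σ) (hs : σ < s) :
    ∑' n : ℕ, (n + 1 : ℝ) ^ (-s) < ∑' n : ℕ, (n + 1 : ℝ) ^ (-σ) := by
  refine Summable.tsum_lt_tsum (i := 1) (fun n => ?_) ?_
    (summable_nat_add_one_rpow_neg (hσ.trans hs)) (summable_nat_add_one_rpow_neg hσ)
  · exact rpow_le_rpow_of_exponent_le (by simp) (by linarith)
  · exact rpow_lt_rpow_of_exponent_lt (by norm_num) (by linarith)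

namespace OrderedFactorization

/-- `ζ - 1` in the Dirichlet ring: its `k`-th power counts ordered factorizations into `k`
factors `≥ 2`. -/
def zetaSubOne : ArithmeticFunction ℕ :=
  ⟨fun n => if 1 < n then 1 else 0, by simp⟩

@[simp]
lemma zetaSubOne_apply (n : ℕ) : zetaSubOne n = if 1 < n then 1 else 0 := rfl

lemma zetaSubOne_add_one : zetaSubOne + 1 = ζ := by
  ext n
  rcases n with _ | _ | n <;> simp [one_apply]

lemma zetaSubOne_pow_succ_apply (k n : ℕ) :
    (zetaSubOne ^ (k + 1)) n =
      ∑ d ∈ n.divisors.filter (fun d => 1 < d), (zetaSubOne ^ k) (n / d) := by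
  rw [pow_succ', mul_apply,
    Nat.sum_divisorsAntidiagonal fun d m => zetaSubOne d * (zetaSubOne ^ k) m, sum_filter]
  simp only [zetaSubOne_apply, ite_mul, one_mul, zero_mul]

lemma zetaSubOne_pow_apply_eq_zero {k n : ℕ} (hn : n < 2 ^ k) : (zetaSubOne ^ k) n = 0 := by
  induction k generalizing n with
  | zero =>
    obtain rfl : n = 0 := by simpa using hn
    simp
  | succ k ih =>
    rw [zetaSubOne_pow_succ_apply]
    refine sum_eq_zero fun d hd => ih ?_
    have hd : 2 ≤ d := (mem_filter.1 hd).2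
    calc n / d ≤ n / 2 := Nat.div_le_div_left hd two_pos
      _ < 2 ^ k := by rw [Nat.div_lt_iff_lt_mul two_pos, ← pow_succ]; exact hn

lemma zetaSubOne_pow_apply_of_le {k n : ℕ} (h : n ≤ k) : (zetaSubOne ^ k) n = 0 :=
  zetaSubOne_pow_apply_eq_zero (h.trans_lt k.lt_two_pow_self)

/-- Truncating at `k < n` loses nothing, by `zetaSubOne_pow_apply_of_le`. -/
def orderedFactorizations : ArithmeticFunction ℕ :=
  ⟨fun n => ∑ k ∈ range n, (zetaSubOne ^ k) n, by simp⟩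

lemma orderedFactorizations_apply (n : ℕ) :
    orderedFactorizations n = ∑ k ∈ range n, (zetaSubOne ^ k) n := rfl

lemma sum_range_zetaSubOne_pow_of_le {m N : ℕ} (h : m ≤ N) :
    ∑ k ∈ range N, (zetaSubOne ^ k) m = orderedFactorizations m :=
  (sum_subset (range_subset_range.2 h) fun _ _ hk =>
    zetaSubOne_pow_apply_of_le (not_lt.1 (mt mem_range.2 hk))).symm

lemma orderedFactorizations_apply_of_two_le {n : ℕ} (hn : 2 ≤ n) :
    orderedFactorizations n =
      ∑ d ∈ n.divisors.filter (fun d => 1 < d), orderedFactorizations (n / d) := by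
  obtain ⟨m, rfl⟩ : ∃ m, n = m + 1 := ⟨n - 1, by omega⟩
  calc orderedFactorizations (m + 1) = ∑ k ∈ range m, (zetaSubOne ^ (k + 1)) (m + 1) := by
        rw [orderedFactorizations_apply, sum_range_succ', pow_zero, one_apply,
          if_neg (by omega), add_zero]
    _ = ∑ d ∈ (m + 1).divisors.filter (fun d => 1 < d),
          ∑ k ∈ range m, (zetaSubOne ^ k) ((m + 1) / d) := by
        simp_rw [zetaSubOne_pow_succ_apply]
        exact sum_comm
    _ = _ := sum_congr rfl fun d hd =>
        sum_range_zetaSubOne_pow_of_le (Nat.le_of_lt_succ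
          (Nat.div_lt_self m.succ_pos (mem_filter.1 hd).2))

lemma eq_orderedFactorizations {R : Type*} [AddCommMonoidWithOne R] (F : ℕ → R) (hF1 : F 1 = 1)
    (hFrec : ∀ n : ℕ, 2 ≤ n →
      F n = ∑ d ∈ n.divisors.filter (fun d => 1 < d), F (n / d))
    {n : ℕ} (hn : 1 ≤ n) : F n = orderedFactorizations n := by
  induction n using Nat.strong_induction_on with
  | _ n ih =>
  rcases hn.eq_or_lt with rfl | hn
  · simp [hF1, orderedFactorizations_apply]
  rw [hFrec n hn, orderedFactorizations_apply_of_two_le hn, Nat.cast_sum]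
  refine sum_congr rfl fun d hd => ?_
  obtain ⟨⟨hdn, -⟩, hd⟩ := mem_filter.1 hd |>.imp_left Nat.mem_divisors.1
  exact ih _ (Nat.div_lt_self (by omega) hd)
    (Nat.div_pos (Nat.le_of_dvd (by omega) hdn) (by omega))

noncomputable def ennLSeries (f : ArithmeticFunction ℕ) (s : ℝ) : ℝ≥0∞ :=
  ∑' n : ℕ, (f n : ℝ≥0∞) * ENNReal.ofReal ((n : ℝ) ^ (-s))

lemma ennLSeries_mul (f g : ArithmeticFunction ℕ) (s : ℝ) :
    ennLSeries (f * g) s = ennLSeries f s * ennLSeries g s := by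
  let a (n : ℕ) : ℝ≥0∞ := ENNReal.ofReal ((n : ℝ) ^ (-s))
  have ha (m n : ℕ) : a (m * n) = a m * a n := by
    simp only [a, Nat.cast_mul, Real.mul_rpow m.cast_nonneg n.cast_nonneg,
      ENNReal.ofReal_mul (rpow_nonneg m.cast_nonneg _)]
  calc ennLSeries (f * g) s
      = ∑' n : ℕ, ∑ p ∈ n.divisorsAntidiagonal, (f p.1 * a p.1) * (g p.2 * a p.2) := by
        refine tsum_congr fun n => ?_
        rw [mul_apply, Nat.cast_sum, sum_mul]
        refine sum_congr rfl fun p hp => ?_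
        rw [← (Nat.mem_divisorsAntidiagonal.1 hp).1]
        change _ * a (p.1 * p.2) = _
        rw [ha]
        push_cast
        ring
    _ = ∑' p : ℕ × ℕ, (f p.1 * a p.1) * (g p.2 * a p.2) :=
        ENNReal.tsum_sum_divisorsAntidiagonal _ fun p hp => by
          rcases Nat.mul_eq_zero.1 hp with h | h <;> simp [h]
    _ = ennLSeries f s * ennLSeries g s := by
        rw [ENNReal.tsum_prod', ennLSeries, ennLSeries, ← ENNReal.tsum_mul_right]
        simp_rw [ENNReal.tsum_mul_left]
        rfl

lemma ennLSeries_one (s : ℝ) : ennLSeries 1 s = 1 := by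
  rw [ennLSeries, tsum_eq_single 1 fun n hn => by simp [one_apply, hn]]
  simp

lemma ennLSeries_pow (f : ArithmeticFunction ℕ) (s : ℝ) (k : ℕ) :
    ennLSeries (f ^ k) s = ennLSeries f s ^ k := by
  induction k with
  | zero => rw [pow_zero, pow_zero, ennLSeries_one]
  | succ k ih => rw [pow_succ, ennLSeries_mul, ih, pow_succ]

lemma ennLSeries_add (f g : ArithmeticFunction ℕ) (s : ℝ) :
    ennLSeries (f + g) s = ennLSeries f s + ennLSeries g s := by
  simp only [ennLSeries, ArithmeticFunction.add_apply, Nat.cast_add, add_mul, ENNReal.tsum_add]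

lemma ennLSeries_eq_tsum_nat_add_one (f : ArithmeticFunction ℕ) (s : ℝ) :
    ennLSeries f s = ∑' n : ℕ, (f (n + 1) : ℝ≥0∞) * ENNReal.ofReal ((n + 1 : ℝ) ^ (-s)) := by
  rw [ennLSeries, tsum_eq_zero_add' ENNReal.summable]
  simp

lemma ennLSeries_zeta {s : ℝ} (hs : 1 < s) :
    ennLSeries ζ s = ENNReal.ofReal (∑' n : ℕ, (n + 1 : ℝ) ^ (-s)) := by
  rw [ENNReal.ofReal_tsum_of_nonneg (fun n => by positivity) (summable_nat_add_one_rpow_neg hs),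
    ennLSeries_eq_tsum_nat_add_one]
  simp [zeta_apply]

lemma ennLSeries_orderedFactorizations (s : ℝ) :
    ennLSeries orderedFactorizations s = (1 - ennLSeries zetaSubOne s)⁻¹ := by
  calc ennLSeries orderedFactorizations s
      = ∑' n : ℕ, ∑' k : ℕ, ((zetaSubOne ^ k) n : ℝ≥0∞) * ENNReal.ofReal ((n : ℝ) ^ (-s)) := by
        refine tsum_congr fun n => ?_
        rw [orderedFactorizations_apply, Nat.cast_sum, sum_mul, eq_comm]
        exact tsum_eq_sum fun k hk => by
          rw [zetaSubOne_pow_apply_of_le (not_lt.1 (mt mem_range.2 hk)), Nat.cast_zero, zero_mul]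
    _ = ∑' k : ℕ, ennLSeries (zetaSubOne ^ k) s := ENNReal.tsum_comm
    _ = (1 - ennLSeries zetaSubOne s)⁻¹ := by
        simp_rw [ennLSeries_pow]
        exact ENNReal.tsum_geometric _

end OrderedFactorization

open OrderedFactorization

/-- If `F(n)` counts ordered factorizations (with `F(1) = 1` and the divisor recurrence),
and `ρ₁ > 1` is the real number with `ζ(ρ₁) = 2`, then for real `s > ρ₁` the Dirichlet
series `∑ F(n) n^{-s}` converges to `1/(2 − ζ(s))`. -/
theorem stmt_7 (F : ℕ → ℝ) (hF1 : F 1 = 1)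
    (hFrec : ∀ n : ℕ, 2 ≤ n →
      F n = ∑ d ∈ n.divisors.filter (fun d => 1 < d), F (n / d))
    (ρ₁ : ℝ) (hρ₁ : 1 < ρ₁)
    (hζρ₁ : ∑' n : ℕ, ((n + 1 : ℝ) ^ (-ρ₁)) = 2)
    (s : ℝ) (hs : ρ₁ < s) :
    Summable (fun n : ℕ => F (n + 1) * ((n + 1 : ℝ) ^ (-s))) ∧
      (∑' n : ℕ, F (n + 1) * ((n + 1 : ℝ) ^ (-s)))
        = 1 / (2 - ∑' n : ℕ, ((n + 1 : ℝ) ^ (-s))) := by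
  set Z := ∑' n : ℕ, ((n + 1 : ℝ) ^ (-s))
  set T := ennLSeries zetaSubOne s
  have hs1 : 1 < s := hρ₁.trans hs
  have hZ : Z < 2 := hζρ₁ ▸ tsum_nat_add_one_rpow_neg_lt hρ₁ hs
  have hT : T + 1 = ENNReal.ofReal Z := by
    rw [← ennLSeries_one s, ← ennLSeries_add, zetaSubOne_add_one, ennLSeries_zeta hs1]
  have hT_lt : T < 1 := by
    rw [← ENNReal.add_lt_add_iff_right ENNReal.one_ne_top, hT, one_add_one_eq_two,
      ← ENNReal.ofReal_ofNat 2]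
    exact (ENNReal.ofReal_lt_ofReal_iff two_pos).2 hZ
  have hT_toReal : T.toReal = Z - 1 := by
    have := congrArg ENNReal.toReal hT
    rw [ENNReal.toReal_add hT_lt.ne_top ENNReal.one_ne_top,
      ENNReal.toReal_ofReal (tsum_nonneg fun n => by positivity), ENNReal.toReal_one] at this
    linarith
  have hF (n : ℕ) : F (n + 1) = orderedFactorizations (n + 1) :=
    eq_orderedFactorizations F hF1 hFrec n.succ_pos
  have hseries : ∑' n : ℕ, ENNReal.ofReal (F (n + 1) * (n + 1 : ℝ) ^ (-s)) = (1 - T)⁻¹ := by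
    rw [← ennLSeries_orderedFactorizations, ennLSeries_eq_tsum_nat_add_one]
    simp [hF, ENNReal.ofReal_mul]
  have hsum := ENNReal.hasSum_toReal_of_tsum_ofReal (fun n => by rw [hF]; positivity) hseries
    (ENNReal.inv_ne_top.2 (tsub_pos_of_lt hT_lt).ne')
  rw [ENNReal.toReal_inv, ENNReal.toReal_sub_of_le hT_lt.le ENNReal.one_ne_top, hT_toReal,
    ENNReal.toReal_one] at hsum
  exact ⟨hsum.summable, hsum.tsum_eq.trans (by ring)⟩
end

section
/- Let (w_n) be non-negative reals satisfying ∑_{n ≤ x} w_n ≤ C·x for all x ≥ 2. Then there is a constant C' > 0 such that for every compactly supported smooth function g on a fixed bounded interval I ⊂ ℝ with L²-norm 1, one has ∑_{n ≥ 1} |ĝ(log n)|² · w_n / n ≤ C', where ĝ is the Fourier transform of g. -/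
open Finset Real MeasureTheory

section CarlesonHelpers

open Complex FourierTransform Set intervalIntegral


section Bessel
variable {T : ℝ} [hT : Fact (0 < T)] {c : ℝ} {f : ℝ → ℂ}

include hT in
lemma besselGrid (hf : Continuous f) (hsupp : ∀ x, x ∉ Set.Ioo c (c + T) → f x = 0)
    (s : ℝ) (S : Finset ℤ) :
    ∑ j ∈ S, ‖FourierTransform.fourier f ((j : ℝ) / T + s)‖ ^ 2 ≤ T * ∫ t : ℝ, ‖f t‖ ^ 2 := by
  have hT0 : 0 < T := hT.out
  set fs : ℝ → ℂ := fun t => Complex.exp ((↑(-2 * π * t * s) : ℂ) * Complex.I) * f t with hfs_def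
  have hfs_cont : Continuous fs := by
    apply Continuous.mul ?_ hf
    exact Complex.continuous_exp.comp ((Complex.continuous_ofReal.comp (by fun_prop)).mul
      continuous_const)
  have hfs_supp : ∀ x, x ∉ Set.Ioo c (c + T) → fs x = 0 := fun x hx => by
    simp [hfs_def, hsupp x hx]
  have hfs_norm : ∀ t, ‖fs t‖ = ‖f t‖ := fun t => by
    rw [hfs_def]
    simp only [norm_mul, Complex.norm_exp_ofReal_mul_I, one_mul]
  set φ : AddCircle T → ℂ := AddCircle.liftIco T c fs with hφ_def
  have hφcont : Continuous φ := by
    apply AddCircle.liftIco_continuous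
    · rw [hfs_supp c (by simp), hfs_supp (c + T) (by simp)]
    · exact hfs_cont.continuousOn
  have hφx : ∀ x ∈ Set.Icc c (c + T), φ x = fs x := by
    intro x hx
    rcases eq_or_lt_of_le hx.2 with h | h
    · rw [h, AddCircle.coe_add_period, hφ_def,
        AddCircle.liftIco_coe_apply (Set.mem_Ico.mpr ⟨le_refl c, by linarith⟩),
        hfs_supp c (by simp), hfs_supp (c + T) (by simp)]
    · exact AddCircle.liftIco_coe_apply ⟨hx.1, h⟩
  have hmem : MemLp φ 2 AddCircle.haarAddCircle :=
    hφcont.memLp_of_hasCompactSupport ((isClosed_tsupport φ).isCompact)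
  set Φ := hmem.toLp φ with hΦ_def
  -- Fourier coefficients of Φ
  have hcoeff : ∀ n : ℤ, fourierCoeff (⇑Φ) n
      = (1 / T : ℝ) • FourierTransform.fourier f ((n : ℝ) / T + s) := by
    intro n
    have e1 : fourierCoeff (⇑Φ) n = fourierCoeff φ n := by
      unfold fourierCoeff
      apply MeasureTheory.integral_congr_ae
      filter_upwards [hmem.coeFn_toLp] with t ht
      rw [ht]
    have e2 : fourierCoeff φ n = fourierCoeffOn (by linarith : c < c + T) fs n :=
      fourierCoeff_liftIco_eq fs n
    rw [e1, e2, fourierCoeffOn_eq_integral]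
    have e3 : ∀ x : ℝ, (fourier (-n) (x : AddCircle (c + T - c))) • fs x
        = Complex.exp ((↑(-2 * π * x * ((n : ℝ) / T + s)) : ℂ) * Complex.I) • f x := by
      intro x
      rw [smul_eq_mul, smul_eq_mul, fourier_coe_apply, hfs_def]
      rw [← mul_assoc, ← Complex.exp_add]
      congr 2
      have : (c + T - c : ℝ) = T := by ring
      rw [this]
      push_cast
      have hTc : (T : ℂ) ≠ 0 := by exact_mod_cast hT0.ne'
      field_simp
      ring
    simp_rw [e3]
    have e4 : (∫ x in c..c + T,
        Complex.exp ((↑(-2 * π * x * ((n : ℝ) / T + s)) : ℂ) * Complex.I) • f x)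
        = ∫ x : ℝ, Complex.exp ((↑(-2 * π * x * ((n : ℝ) / T + s)) : ℂ) * Complex.I) • f x := by
      apply integral_eq_integral_of_support_subset
      intro x hx
      have : f x ≠ 0 := by
        intro h0
        apply hx
        simp [h0]
      have hxm : x ∈ Set.Ioo c (c + T) := by
        by_contra hc
        exact this (hsupp x hc)
      exact Set.Ioo_subset_Ioc_self hxm
    rw [e4, ← Real.fourier_real_eq_integral_exp_smul]
    norm_num
  have hnorm_coeff : ∀ n : ℤ, ‖fourierCoeff (⇑Φ) n‖ ^ 2
      = (1 / T) ^ 2 * ‖FourierTransform.fourier f ((n : ℝ) / T + s)‖ ^ 2 := by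
    intro n
    rw [hcoeff n, norm_smul]
    rw [Real.norm_eq_abs, _root_.abs_of_nonneg (by positivity : (0:ℝ) ≤ 1 / T)]
    ring
  have hsummable : Summable fun i : ℤ => ‖fourierCoeff (⇑Φ) i‖ ^ 2 := by
    have h1 := (lp.memℓp (fourierBasis.repr Φ)).summable
      (by norm_num : 0 < (2 : ENNReal).toReal)
    apply Summable.congr h1
    intro i
    rw [fourierBasis_repr]
    norm_num
  have hpar := tsum_sq_fourierCoeff Φ
  have hint1 : (∫ t : AddCircle T, ‖(⇑Φ : AddCircle T → ℂ) t‖ ^ 2 ∂AddCircle.haarAddCircle)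
      = ∫ t : AddCircle T, ‖φ t‖ ^ 2 ∂AddCircle.haarAddCircle := by
    apply MeasureTheory.integral_congr_ae
    filter_upwards [hmem.coeFn_toLp] with t ht
    rw [ht]
  have hint2 : (∫ t : AddCircle T, ‖φ t‖ ^ 2 ∂AddCircle.haarAddCircle)
      = (1 / T) * ∫ t : ℝ, ‖f t‖ ^ 2 := by
    have hv := AddCircle.intervalIntegral_preimage T c (fun b => ‖φ b‖ ^ 2)
    have hvol := AddCircle.volume_eq_smul_haarAddCircle (T := T)
    have hsm : (∫ b : AddCircle T, ‖φ b‖ ^ 2)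
        = T * ∫ t : AddCircle T, ‖φ t‖ ^ 2 ∂AddCircle.haarAddCircle := by
      rw [hvol, MeasureTheory.integral_smul_measure, ENNReal.toReal_ofReal hT0.le,
        smul_eq_mul]
    have hiv : (∫ x in c..c + T, ‖φ (x : AddCircle T)‖ ^ 2) = ∫ t : ℝ, ‖f t‖ ^ 2 := by
      have h1 : (∫ x in c..c + T, ‖φ (x : AddCircle T)‖ ^ 2)
          = ∫ x in c..c + T, ‖f x‖ ^ 2 := by
        apply intervalIntegral.integral_congr
        intro x hx
        rw [Set.uIcc_of_le (by linarith : c ≤ c + T)] at hx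
        show ‖φ ↑x‖ ^ 2 = ‖f x‖ ^ 2
        rw [hφx x hx, hfs_norm]
      rw [h1]
      apply integral_eq_integral_of_support_subset
      intro x hx
      have hfx : f x ≠ 0 := by
        intro h0
        apply hx
        simp [h0]
      have hxm : x ∈ Set.Ioo c (c + T) := by
        by_contra hc
        exact hfx (hsupp x hc)
      exact Set.Ioo_subset_Ioc_self hxm
    have := hsm.symm.trans (hv.symm.trans hiv)
    rw [← this]
    field_simp
  calc ∑ j ∈ S, ‖FourierTransform.fourier f ((j : ℝ) / T + s)‖ ^ 2
      = ∑ j ∈ S, T ^ 2 * ‖fourierCoeff (⇑Φ) j‖ ^ 2 := by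
        apply Finset.sum_congr rfl
        intro j _
        rw [hnorm_coeff j]
        field_simp
    _ = T ^ 2 * ∑ j ∈ S, ‖fourierCoeff (⇑Φ) j‖ ^ 2 := by rw [Finset.mul_sum]
    _ ≤ T ^ 2 * ∑' i : ℤ, ‖fourierCoeff (⇑Φ) i‖ ^ 2 := by
        apply mul_le_mul_of_nonneg_left _ (by positivity)
        exact Summable.sum_le_tsum S (fun i _ => by positivity) hsummable
    _ = T ^ 2 * ((1 / T) * ∫ t : ℝ, ‖f t‖ ^ 2) := by rw [hpar, hint1, hint2]
    _ = T * ∫ t : ℝ, ‖f t‖ ^ 2 := by field_simp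

include hT in
lemma stripBound (hf : Continuous f) (hsupp : ∀ x, x ∉ Set.Ioo c (c + T) → f x = 0)
    (u : ℝ) (m : ℕ) :
    ∫ ξ in u..(u + m / T), ‖FourierTransform.fourier f ξ‖ ^ 2 ≤ ∫ t : ℝ, ‖f t‖ ^ 2 := by
  have hT0 : 0 < T := hT.out
  have hsub : tsupport f ⊆ Set.Icc c (c + T) := by
    apply closure_minimal ?_ isClosed_Icc
    intro x hx
    by_contra hc
    exact hx (hsupp x (fun hm => hc (Set.Ioo_subset_Icc_self hm)))
  have hcs : HasCompactSupport f := IsCompact.of_isClosed_subset isCompact_Icc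
    (isClosed_tsupport f) hsub
  have hint : MeasureTheory.Integrable f := hf.integrable_of_hasCompactSupport hcs
  have hFcont : Continuous (FourierTransform.fourier f) :=
    VectorFourier.fourierIntegral_continuous Real.continuous_fourierChar
      (L := innerₗ ℝ) (by exact continuous_inner) hint
  have hf2nonneg : 0 ≤ ∫ t : ℝ, ‖f t‖ ^ 2 := by positivity
  have key : ∀ x ∈ Set.Icc (0:ℝ) (1/T),
      (∑ j ∈ Finset.range m, ‖FourierTransform.fourier f (x + (u + j / T))‖ ^ 2)
        ≤ T * ∫ t : ℝ, ‖f t‖ ^ 2 := by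
    intro x _
    have hb := besselGrid hf hsupp (u + x) ((Finset.range m).image (Nat.cast : ℕ → ℤ))
    rw [Finset.sum_image (by intro p _ q _ h; exact_mod_cast h)] at hb
    refine le_trans (le_of_eq ?_) hb
    apply Finset.sum_congr rfl
    intro j _
    congr 1
    push_cast
    ring
  have step1 : (∫ ξ in u..(u + m / T), ‖FourierTransform.fourier f ξ‖ ^ 2)
      = ∑ j ∈ Finset.range m,
        ∫ ξ in (u + j / T)..(u + (j + 1 : ℕ) / T), ‖FourierTransform.fourier f ξ‖ ^ 2 := by
    rw [intervalIntegral.sum_integral_adjacent_intervals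
      (f := fun ξ => ‖FourierTransform.fourier f ξ‖ ^ 2) (a := fun j : ℕ => u + j / T) (fun k _ => (hFcont.norm.pow 2).intervalIntegrable _ _)]
    norm_num
  have step2 : ∀ j : ℕ, (∫ ξ in (u + j / T)..(u + (j + 1 : ℕ) / T),
        ‖FourierTransform.fourier f ξ‖ ^ 2)
      = ∫ x in (0:ℝ)..(1/T), ‖FourierTransform.fourier f (x + (u + j / T))‖ ^ 2 := by
    intro j
    rw [intervalIntegral.integral_comp_add_right
      (fun ξ => ‖FourierTransform.fourier f ξ‖ ^ 2) (u + j / T)]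
    congr 1
    · ring
    · push_cast
      field_simp
      ring
  have step3 : (∑ j ∈ Finset.range m,
        ∫ x in (0:ℝ)..(1/T), ‖FourierTransform.fourier f (x + (u + j / T))‖ ^ 2)
      = ∫ x in (0:ℝ)..(1/T),
        ∑ j ∈ Finset.range m, ‖FourierTransform.fourier f (x + (u + j / T))‖ ^ 2 := by
    rw [intervalIntegral.integral_finset_sum]
    intro j _
    exact (((hFcont.comp (continuous_id.add continuous_const)).norm.pow 2).intervalIntegrable _ _)
  rw [step1]
  simp_rw [step2]
  rw [step3]
  have step4 : (∫ x in (0:ℝ)..(1/T),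
        ∑ j ∈ Finset.range m, ‖FourierTransform.fourier f (x + (u + j / T))‖ ^ 2)
      ≤ ∫ _x in (0:ℝ)..(1/T), (T * ∫ t : ℝ, ‖f t‖ ^ 2) := by
    apply intervalIntegral.integral_mono_on (by positivity)
    · apply ContinuousOn.intervalIntegrable
      apply Continuous.continuousOn
      exact continuous_finset_sum _ (fun j _ =>
        ((hFcont.comp (continuous_id.add continuous_const)).norm.pow 2))
    · exact intervalIntegrable_const
    · exact key
  refine le_trans step4 ?_
  rw [intervalIntegral.integral_const, smul_eq_mul, sub_zero]
  apply le_of_eq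
  field_simp

end Bessel

lemma unitSup {F G : ℝ → ℂ} (hF : Continuous F) (hG : Continuous G)
    (hFG : ∀ x : ℝ, HasDerivAt F (G x) x) {k ξ : ℝ} (hξ : ξ ∈ Set.Icc k (k + 1)) :
    ‖F ξ‖ ^ 2 ≤ 2 * (∫ η in k..k+1, ‖F η‖ ^ 2) + 2 * ∫ η in k..k+1, ‖G η‖ ^ 2 := by
  have hk1 : (k : ℝ) ≤ k + 1 := by linarith
  set cG : ℝ := ∫ t in k..k+1, ‖G t‖ with hcG_def
  have hcG0 : 0 ≤ cG := intervalIntegral.integral_nonneg hk1 (fun _ _ => norm_nonneg _)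
  have hstep : ∀ η ∈ Set.Icc k (k + 1), ‖F ξ‖ ≤ ‖F η‖ + cG := by
    intro η hη
    have heq : ∫ t in η..ξ, G t = F ξ - F η :=
      intervalIntegral.integral_eq_sub_of_hasDerivAt (fun t _ => hFG t)
        (hG.intervalIntegrable _ _)
    have h1 : ‖F ξ‖ ≤ ‖F η‖ + ‖F ξ - F η‖ := by
      have := norm_add_le (F η) (F ξ - F η)
      simpa using this
    have h2 : ‖F ξ - F η‖ ≤ cG := by
      rw [← heq]
      refine le_trans (intervalIntegral.norm_integral_le_abs_integral_norm) ?_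
      have habs : |∫ t in η..ξ, ‖G t‖| ≤ |∫ t in k..k+1, ‖G t‖| := by
        apply intervalIntegral.abs_integral_mono_interval
        · rw [Set.uIoc_of_le hk1]
          intro t ht
          exact ⟨lt_of_le_of_lt (le_min hη.1 hξ.1) ht.1,
            le_trans ht.2 (max_le hη.2 hξ.2)⟩
        · exact Filter.Eventually.of_forall (fun t => norm_nonneg _)
        · exact hG.norm.intervalIntegrable _ _
      refine le_trans habs ?_
      rw [_root_.abs_of_nonneg hcG0]
    linarith
  have hvar : cG ^ 2 ≤ ∫ η in k..k+1, ‖G η‖ ^ 2 := by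
    have hnn : 0 ≤ ∫ η in k..k+1, (‖G η‖ - cG) ^ 2 :=
      intervalIntegral.integral_nonneg hk1 (fun t _ => sq_nonneg _)
    have hexp : (∫ η in k..k+1, (‖G η‖ - cG) ^ 2)
        = (∫ η in k..k+1, ‖G η‖ ^ 2) - 2 * cG * cG + cG ^ 2 := by
      have hrw : ∀ η : ℝ, (‖G η‖ - cG) ^ 2 = ‖G η‖ ^ 2 - 2 * cG * ‖G η‖ + cG ^ 2 := by
        intro η; ring
      simp_rw [hrw]
      rw [intervalIntegral.integral_add (f := fun η => ‖G η‖ ^ 2 - 2 * cG * ‖G η‖)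
          (g := fun _ => cG ^ 2) (IntervalIntegrable.sub
          ((hG.norm.pow 2).intervalIntegrable _ _)
          ((continuous_const.mul hG.norm).intervalIntegrable _ _)) intervalIntegrable_const,
        intervalIntegral.integral_sub (f := fun η => ‖G η‖ ^ 2) (g := fun η => 2 * cG * ‖G η‖)
          ((hG.norm.pow 2).intervalIntegrable _ _)
          ((continuous_const.mul hG.norm).intervalIntegrable _ _),
        intervalIntegral.integral_const_mul, intervalIntegral.integral_const]
      rw [← hcG_def]
      simp
    nlinarith [hnn, hexp]
  have haver : ‖F ξ‖ ^ 2 ≤ 2 * (∫ η in k..k+1, ‖F η‖ ^ 2) + 2 * cG ^ 2 := by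
    have hpt : ∀ η ∈ Set.Icc k (k + 1), ‖F ξ‖ ^ 2 ≤ 2 * ‖F η‖ ^ 2 + 2 * cG ^ 2 := by
      intro η hη
      have := hstep η hη
      nlinarith [this, norm_nonneg (F ξ), norm_nonneg (F η), hcG0, sq_nonneg (‖F η‖ - cG)]
    have hmono : (∫ _η in k..k+1, ‖F ξ‖ ^ 2)
        ≤ ∫ η in k..k+1, (2 * ‖F η‖ ^ 2 + 2 * cG ^ 2) := by
      apply intervalIntegral.integral_mono_on hk1 intervalIntegrable_const
      · exact (((continuous_const.mul (hF.norm.pow 2))).add continuous_const).intervalIntegrable _ _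
      · exact hpt
    rw [intervalIntegral.integral_const] at hmono
    simp only [add_sub_cancel_left, one_smul] at hmono
    rw [intervalIntegral.integral_add (f := fun η => 2 * ‖F η‖ ^ 2) (g := fun _ => 2 * cG ^ 2)
        ((continuous_const.mul (hF.norm.pow 2)).intervalIntegrable _ _)
        intervalIntegrable_const,
      intervalIntegral.integral_const_mul, intervalIntegral.integral_const] at hmono
    simp only [add_sub_cancel_left, one_smul] at hmono
    linarith
  nlinarith [haver, hvar]

lemma fiberWeight (w : ℕ → ℝ) (hw : ∀ n, 0 ≤ w n) (C : ℝ)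
    (hcheb : ∀ x : ℝ, 2 ≤ x →
      ∑ n ∈ (Finset.range (⌊x⌋₊ + 1)).filter (fun n : ℕ => 1 ≤ n), w n ≤ C * x)
    (k N : ℕ) :
    ∑ n ∈ (Finset.range N).filter (fun n : ℕ => ⌊Real.log (n + 1)⌋₊ = k),
        w (n + 1) / (n + 1)
      ≤ C * (Real.exp 1 + 2) := by
  have hC0 : 0 ≤ C := by
    have h2 := hcheb 2 le_rfl
    have hnn : (0:ℝ) ≤ ∑ n ∈ (Finset.range (⌊(2:ℝ)⌋₊ + 1)).filter (fun n : ℕ => 1 ≤ n), w n :=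
      Finset.sum_nonneg (fun n _ => hw n)
    linarith
  set Fib := (Finset.range N).filter (fun n : ℕ => ⌊Real.log (n + 1)⌋₊ = k) with hFib
  have hbounds : ∀ n ∈ Fib, Real.exp k ≤ (n:ℝ) + 1 ∧ ((n:ℝ) + 1) < Real.exp (k + 1) := by
    intro n hn
    have hfl : ⌊Real.log ((n:ℝ) + 1)⌋₊ = k := (Finset.mem_filter.mp hn).2
    have hpos : (0:ℝ) < (n:ℝ) + 1 := by positivity
    have h1 : (1:ℝ) ≤ (n:ℝ) + 1 := by
      have : (0:ℝ) ≤ (n:ℝ) := Nat.cast_nonneg n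
      linarith
    have hlog0 : 0 ≤ Real.log ((n:ℝ) + 1) := Real.log_nonneg h1
    have := (Nat.floor_eq_iff hlog0).mp hfl
    constructor
    · calc Real.exp k ≤ Real.exp (Real.log ((n:ℝ)+1)) := Real.exp_le_exp.mpr this.1
        _ = (n:ℝ) + 1 := Real.exp_log hpos
    · calc ((n:ℝ)+1) = Real.exp (Real.log ((n:ℝ)+1)) := (Real.exp_log hpos).symm
        _ < Real.exp (k+1) := Real.exp_lt_exp.mpr (by exact_mod_cast this.2)
  have step1 : ∑ n ∈ Fib, w (n + 1) / (n + 1)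
      ≤ ∑ n ∈ Fib, (Real.exp k)⁻¹ * w (n + 1) := by
    apply Finset.sum_le_sum
    intro n hn
    have hb := (hbounds n hn).1
    rw [div_eq_mul_inv, mul_comm]
    apply mul_le_mul_of_nonneg_right _ (hw (n+1))
    apply inv_anti₀ (Real.exp_pos _) hb
  have step2 : ∑ n ∈ Fib, w (n + 1) ≤ C * (Real.exp (k + 1) + 2) := by
    set x : ℝ := Real.exp (k + 1) + 2 with hx
    have hx2 : (2:ℝ) ≤ x := by
      have := Real.exp_pos ((k:ℝ) + 1)
      simp only [hx]; linarith
    have himg : ∑ n ∈ Fib, w (n + 1) = ∑ m ∈ Fib.image (· + 1), w m := by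
      rw [Finset.sum_image (fun p _ q _ h => by omega)]
    rw [himg]
    have hsub : Fib.image (· + 1) ⊆ (Finset.range (⌊x⌋₊ + 1)).filter (fun n : ℕ => 1 ≤ n) := by
      intro m hm
      obtain ⟨n, hn, rfl⟩ := Finset.mem_image.mp hm
      rw [Finset.mem_filter, Finset.mem_range]
      refine ⟨?_, by omega⟩
      have hle : ((n + 1 : ℕ) : ℝ) ≤ x := by
        push_cast
        have := (hbounds n hn).2
        simp only [hx]
        linarith [Real.exp_pos ((k:ℝ)+1)]
      have := Nat.le_floor hle
      omega
    refine le_trans (Finset.sum_le_sum_of_subset_of_nonneg hsub (fun m _ _ => hw m)) ?_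
    exact hcheb x hx2
  have hEk : (1:ℝ) ≤ Real.exp k := Real.one_le_exp (by positivity)
  have hEk0 : (0:ℝ) < Real.exp k := Real.exp_pos _
  calc ∑ n ∈ Fib, w (n + 1) / (n + 1)
      ≤ ∑ n ∈ Fib, (Real.exp k)⁻¹ * w (n + 1) := step1
    _ = (Real.exp k)⁻¹ * ∑ n ∈ Fib, w (n + 1) := by rw [Finset.mul_sum]
    _ ≤ (Real.exp k)⁻¹ * (C * (Real.exp (k + 1) + 2)) := by
        apply mul_le_mul_of_nonneg_left step2 (by positivity)
    _ ≤ C * (Real.exp 1 + 2) := by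
        rw [Real.exp_add]
        rw [inv_mul_le_iff₀ hEk0]
        have h2 : (2:ℝ) ≤ 2 * Real.exp k := by linarith
        nlinarith [Real.exp_pos (1:ℝ)]


end CarlesonHelpers

/-- Carleson-type bound: if `∑_{n ≤ x} w_n ≤ C x`, then for smooth `g` supported in a fixed
bounded interval `[a,b]` with unit `L²` norm, `∑_n |ĝ(log n)|² w_n / n` is uniformly bounded. -/
theorem stmt_9 (w : ℕ → ℝ) (hw : ∀ n, 0 ≤ w n) (C : ℝ)
    (hcheb : ∀ x : ℝ, 2 ≤ x →
      ∑ n ∈ (Finset.range (⌊x⌋₊ + 1)).filter (fun n : ℕ => 1 ≤ n), w n ≤ C * x)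
    (a b : ℝ) (hab : a < b) :
    ∃ C' : ℝ, 0 < C' ∧ ∀ g : ℝ → ℂ, ContDiff ℝ (⊤ : ℕ∞) g →
      tsupport g ⊆ Set.Icc a b →
      (∫ t : ℝ, ‖g t‖ ^ 2) = 1 →
      (∑' n : ℕ, ‖FourierTransform.fourier g (Real.log (n + 1))‖ ^ 2 * w (n + 1) / (n + 1))
        ≤ C' := by
  classical
  have hC0 : 0 ≤ C := by
    have h2 := hcheb 2 le_rfl
    have hnn : (0:ℝ) ≤ ∑ n ∈ (Finset.range (⌊(2:ℝ)⌋₊ + 1)).filter (fun n : ℕ => 1 ≤ n), w n :=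
      Finset.sum_nonneg (fun n _ => hw n)
    linarith
  set M : ℝ := max |a| |b| with hM
  have hM0 : 0 ≤ M := le_trans (abs_nonneg a) (le_max_left _ _)
  set B : ℝ := 2 + 2 * ((2 * π * M) ^ 2) with hB
  have hB0 : 0 ≤ B := by positivity
  have hCp0 : 0 ≤ C * (Real.exp 1 + 2) * B :=
    mul_nonneg (mul_nonneg hC0 (by positivity)) hB0
  refine ⟨C * (Real.exp 1 + 2) * B + 1, by linarith, ?_⟩
  intro g hg hsupp hL2
  have hgc : Continuous g := hg.continuous
  have hgz : ∀ x, x ∉ Set.Icc a b → g x = 0 := fun x hx =>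
    image_eq_zero_of_notMem_tsupport (fun hmem => hx (hsupp hmem))
  -- the period
  set P : ℕ := ⌈b - a⌉₊ + 3 with hP
  set T : ℝ := (P : ℝ) with hTdef
  have hT0 : 0 < T := by
    rw [hTdef]; positivity
  haveI : Fact (0 < T) := ⟨hT0⟩
  set c : ℝ := a - 1 with hc
  have hIoo : Set.Icc a b ⊆ Set.Ioo c (c + T) := by
    intro x hx
    have hba : b - a ≤ (⌈b - a⌉₊ : ℝ) := Nat.le_ceil _
    constructor
    · have := hx.1; rw [hc]; linarith
    · have := hx.2
      rw [hc, hTdef, hP]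
      push_cast
      linarith
  have hsupp0 : ∀ x, x ∉ Set.Ioo c (c + T) → g x = 0 := fun x hx =>
    hgz x (fun hmem => hx (hIoo hmem))
  -- derivative data
  set h : ℝ → ℂ := fun x : ℝ => (-2 * (π:ℂ) * Complex.I * (x:ℂ)) • g x with hh_def
  have hhc : Continuous h := by
    apply Continuous.fun_smul _ hgc
    exact (continuous_const.mul (Complex.continuous_ofReal)) 
  have hh_supp0 : ∀ x, x ∉ Set.Ioo c (c + T) → h x = 0 := fun x hx => by
    simp [hh_def, hsupp0 x hx]
  have hgCS : HasCompactSupport g :=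
    IsCompact.of_isClosed_subset isCompact_Icc (isClosed_tsupport g) hsupp
  have hsupp_sub : ∀ (u : ℝ → ℂ), (∀ x, g x = 0 → u x = 0) → HasCompactSupport u := by
    intro u hu
    have hsub : tsupport u ⊆ Set.Icc a b := by
      refine closure_minimal ?_ isClosed_Icc
      intro x hx
      by_contra hxc
      exact hx (hu x (hgz x hxc))
    exact IsCompact.of_isClosed_subset isCompact_Icc (isClosed_tsupport u) hsub
  have hsupp_subR : ∀ (u : ℝ → ℝ), (∀ x, g x = 0 → u x = 0) → HasCompactSupport u := by
    intro u hu
    have hsub : tsupport u ⊆ Set.Icc a b := by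
      refine closure_minimal ?_ isClosed_Icc
      intro x hx
      by_contra hxc
      exact hx (hu x (hgz x hxc))
    exact IsCompact.of_isClosed_subset isCompact_Icc (isClosed_tsupport u) hsub
  have hhCS : HasCompactSupport h := hsupp_sub h (fun x hx => by simp [hh_def, hx])
  have hgint : MeasureTheory.Integrable g := hgc.integrable_of_hasCompactSupport hgCS
  have hg'int : MeasureTheory.Integrable (fun x : ℝ => x • g x) := by
    apply Continuous.integrable_of_hasCompactSupport
    · exact continuous_id.smul hgc
    · exact hsupp_sub _ (fun x hx => by simp [hx])
  have hhint : MeasureTheory.Integrable h := hhc.integrable_of_hasCompactSupport hhCS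
  have hderiv : ∀ x : ℝ, HasDerivAt (FourierTransform.fourier g) (FourierTransform.fourier h x) x :=
    fun x => Real.hasDerivAt_fourier hgint hg'int x
  have hFcont : Continuous (FourierTransform.fourier g) :=
    VectorFourier.fourierIntegral_continuous Real.continuous_fourierChar
      (L := innerₗ ℝ) (by exact continuous_inner) hgint
  have hGcont : Continuous (FourierTransform.fourier h) :=
    VectorFourier.fourierIntegral_continuous Real.continuous_fourierChar
      (L := innerₗ ℝ) (by exact continuous_inner) hhint
  -- L² bound on h
  have hintg2 : MeasureTheory.Integrable (fun t : ℝ => ‖g t‖ ^ 2) := by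
    apply Continuous.integrable_of_hasCompactSupport (hgc.norm.pow 2)
    exact hsupp_subR _ (fun x hx => by simp [hx])
  have hinth2 : MeasureTheory.Integrable (fun t : ℝ => ‖h t‖ ^ 2) := by
    apply Continuous.integrable_of_hasCompactSupport (hhc.norm.pow 2)
    exact hsupp_subR _ (fun x hx => by simp [hh_def, hx])
  have hh2pt : ∀ t : ℝ, ‖h t‖ ^ 2 ≤ (2 * π * M) ^ 2 * ‖g t‖ ^ 2 := by
    intro t
    by_cases hgt : g t = 0
    · simp [hh_def, hgt]
    · have htm : t ∈ Set.Icc a b := by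
        by_contra hxc
        exact hgt (hgz t hxc)
      have habs : |t| ≤ M := by
        rw [abs_le]
        constructor
        · have h1 : -M ≤ -|a| := by
            simp only [neg_le_neg_iff]
            exact le_max_left _ _
          have h2 : -|a| ≤ a := neg_abs_le a
          linarith [htm.1]
        · have h1 : b ≤ |b| := le_abs_self b
          have h2 : |b| ≤ M := le_max_right _ _
          linarith [htm.2]
      have hcoef : ‖(-2 * (π:ℂ) * Complex.I * (t:ℂ))‖ = 2 * π * |t| := by
        simp only [norm_mul, Complex.norm_I, Complex.norm_real, Real.norm_eq_abs]
        rw [_root_.abs_of_nonneg Real.pi_pos.le]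
        norm_num
      rw [hh_def]
      simp only [norm_smul, hcoef]
      have hgn : 0 ≤ ‖g t‖ := norm_nonneg _
      have ht2 : |t| ^ 2 ≤ M ^ 2 := by nlinarith [abs_nonneg t]
      calc (2 * π * |t| * ‖g t‖) ^ 2 = (2 * π) ^ 2 * (|t| ^ 2 * ‖g t‖ ^ 2) := by ring
        _ ≤ (2 * π) ^ 2 * (M ^ 2 * ‖g t‖ ^ 2) := by
            apply mul_le_mul_of_nonneg_left _ (sq_nonneg _)
            exact mul_le_mul_of_nonneg_right ht2 (sq_nonneg _)
        _ = (2 * π * M) ^ 2 * ‖g t‖ ^ 2 := by ring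
  have hinth2le : (∫ t : ℝ, ‖h t‖ ^ 2) ≤ (2 * π * M) ^ 2 := by
    calc (∫ t : ℝ, ‖h t‖ ^ 2) ≤ ∫ t : ℝ, (2 * π * M) ^ 2 * ‖g t‖ ^ 2 :=
        MeasureTheory.integral_mono hinth2 (hintg2.const_mul _) hh2pt
      _ = (2 * π * M) ^ 2 * ∫ t : ℝ, ‖g t‖ ^ 2 := MeasureTheory.integral_const_mul _ _
      _ = (2 * π * M) ^ 2 := by rw [hL2, mul_one]
  set S : ℕ → ℝ := fun k =>
    2 * (∫ η in (k:ℝ)..(k:ℝ)+1, ‖FourierTransform.fourier g η‖ ^ 2)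
    + 2 * (∫ η in (k:ℝ)..(k:ℝ)+1, ‖FourierTransform.fourier h η‖ ^ 2) with hS_def
  have hS0 : ∀ k, 0 ≤ S k := by
    intro k
    have h1 : 0 ≤ ∫ η in (k:ℝ)..(k:ℝ)+1, ‖FourierTransform.fourier g η‖ ^ 2 :=
      intervalIntegral.integral_nonneg (by linarith) (fun _ _ => by positivity)
    have h2 : 0 ≤ ∫ η in (k:ℝ)..(k:ℝ)+1, ‖FourierTransform.fourier h η‖ ^ 2 :=
      intervalIntegral.integral_nonneg (by linarith) (fun _ _ => by positivity)
    rw [hS_def]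
    dsimp only
    linarith
  have hSsum : ∀ K : ℕ, (∑ k ∈ Finset.range K, S k) ≤ B := by
    intro K
    have hadj : ∀ (u : ℝ → ℂ), Continuous u → (∑ k ∈ Finset.range K,
        ∫ η in (k:ℝ)..(k:ℝ)+1, ‖u η‖ ^ 2) = ∫ η in (0:ℝ)..(K:ℝ), ‖u η‖ ^ 2 := by
      intro u hu
      have hval := intervalIntegral.sum_integral_adjacent_intervals
        (a := fun k : ℕ => (k:ℝ)) (μ := MeasureTheory.volume)
        (f := fun η => ‖u η‖ ^ 2) (n := K) (fun k _ => (hu.norm.pow 2).intervalIntegrable _ _)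
      simp only [Nat.cast_zero] at hval
      rw [← hval]
      apply Finset.sum_congr rfl
      intro k _
      congr 1
      push_cast
      ring
    have he : (0:ℝ) + ((K * P : ℕ):ℝ) / T = (K:ℝ) := by
      rw [hTdef]
      push_cast
      have hP0 : (P:ℝ) ≠ 0 := by rw [hP]; positivity
      rw [zero_add]
      field_simp
    have hstripg : (∫ η in (0:ℝ)..(K:ℝ), ‖FourierTransform.fourier g η‖ ^ 2) ≤ 1 := by
      have hstr := stripBound (T := T) (c := c) hgc hsupp0 0 (K * P)
      rw [he, hL2] at hstr
      exact hstr
    have hstriph : (∫ η in (0:ℝ)..(K:ℝ), ‖FourierTransform.fourier h η‖ ^ 2) ≤ (2*π*M)^2 := by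
      have hstr := stripBound (T := T) (c := c) hhc hh_supp0 0 (K * P)
      rw [he] at hstr
      exact le_trans hstr hinth2le
    rw [hS_def]
    dsimp only
    rw [Finset.sum_add_distrib, ← Finset.mul_sum, ← Finset.mul_sum,
      hadj _ hFcont, hadj _ hGcont, hB]
    linarith
  apply tsum_le_of_sum_le' (by linarith : (0:ℝ) ≤ C * (Real.exp 1 + 2) * B + 1)
  intro s
  have ht0 : ∀ n : ℕ, 0 ≤ ‖FourierTransform.fourier g (Real.log (n + 1))‖ ^ 2 * w (n + 1) / (n + 1) :=
    fun n => div_nonneg (mul_nonneg (by positivity) (hw _)) (by positivity)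
  set N : ℕ := s.sup id + 1 with hN
  have hsub : s ⊆ Finset.range N := by
    intro n hn
    exact Finset.mem_range.mpr (Nat.lt_succ_of_le (Finset.le_sup (f := id) hn))
  have h1 : (∑ n ∈ s, ‖FourierTransform.fourier g (Real.log (n + 1))‖ ^ 2 * w (n + 1) / (n + 1))
      ≤ ∑ n ∈ Finset.range N, ‖FourierTransform.fourier g (Real.log (n + 1))‖ ^ 2 * w (n + 1) / (n + 1) :=
    Finset.sum_le_sum_of_subset_of_nonneg hsub (fun n _ _ => ht0 n)
  have hmap : ∀ n ∈ Finset.range N, ⌊Real.log ((n:ℝ) + 1)⌋₊ ∈ Finset.range N := by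
    intro n hn
    rw [Finset.mem_range] at hn ⊢
    have hpos : (0:ℝ) < (n:ℝ) + 1 := by positivity
    have hlog : Real.log ((n:ℝ) + 1) ≤ (n:ℝ) := by
      have := Real.log_le_sub_one_of_pos hpos
      linarith
    have hfl := Nat.floor_le_floor hlog
    rw [Nat.floor_natCast] at hfl
    omega
  have h2 : (∑ n ∈ Finset.range N,
        ‖FourierTransform.fourier g (Real.log (n + 1))‖ ^ 2 * w (n + 1) / (n + 1))
      = ∑ k ∈ Finset.range N, ∑ n ∈ (Finset.range N).filter
          (fun n : ℕ => ⌊Real.log ((n:ℝ) + 1)⌋₊ = k),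
          ‖FourierTransform.fourier g (Real.log (n + 1))‖ ^ 2 * w (n + 1) / (n + 1) :=
    (Finset.sum_fiberwise_of_maps_to hmap _).symm
  have h3 : ∀ k ∈ Finset.range N, (∑ n ∈ (Finset.range N).filter
        (fun n : ℕ => ⌊Real.log ((n:ℝ) + 1)⌋₊ = k),
        ‖FourierTransform.fourier g (Real.log (n + 1))‖ ^ 2 * w (n + 1) / (n + 1))
      ≤ S k * (C * (Real.exp 1 + 2)) := by
    intro k _
    have hbound : ∀ n ∈ (Finset.range N).filter
        (fun n : ℕ => ⌊Real.log ((n:ℝ) + 1)⌋₊ = k),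
        ‖FourierTransform.fourier g (Real.log (n + 1))‖ ^ 2 * w (n + 1) / (n + 1)
          ≤ S k * (w (n + 1) / ((n:ℝ) + 1)) := by
      intro n hn
      have hfl := (Finset.mem_filter.mp hn).2
      have hpos : (0:ℝ) < (n:ℝ) + 1 := by positivity
      have hone : (1:ℝ) ≤ (n:ℝ) + 1 := by
        have : (0:ℝ) ≤ (n:ℝ) := Nat.cast_nonneg n
        linarith
      have hlog0 : 0 ≤ Real.log ((n:ℝ) + 1) := Real.log_nonneg hone
      have hk := (Nat.floor_eq_iff hlog0).mp hfl
      have hmem : Real.log ((n:ℝ) + 1) ∈ Set.Icc (k:ℝ) ((k:ℝ) + 1) := by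
        constructor
        · exact hk.1
        · have := hk.2
          push_cast at this
          linarith
      have hFle := unitSup hFcont hGcont hderiv hmem
      rw [mul_div_assoc]
      apply mul_le_mul_of_nonneg_right _ (div_nonneg (hw _) hpos.le)
      rw [hS_def]
      exact hFle
    calc (∑ n ∈ (Finset.range N).filter
          (fun n : ℕ => ⌊Real.log ((n:ℝ) + 1)⌋₊ = k),
          ‖FourierTransform.fourier g (Real.log (n + 1))‖ ^ 2 * w (n + 1) / (n + 1))
        ≤ ∑ n ∈ (Finset.range N).filter
          (fun n : ℕ => ⌊Real.log ((n:ℝ) + 1)⌋₊ = k), S k * (w (n + 1) / ((n:ℝ) + 1)) :=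
          Finset.sum_le_sum hbound
      _ = S k * ∑ n ∈ (Finset.range N).filter
          (fun n : ℕ => ⌊Real.log ((n:ℝ) + 1)⌋₊ = k), w (n + 1) / ((n:ℝ) + 1) := by
          rw [Finset.mul_sum]
      _ ≤ S k * (C * (Real.exp 1 + 2)) := by
          apply mul_le_mul_of_nonneg_left _ (hS0 k)
          exact fiberWeight w hw C hcheb k N
  calc (∑ n ∈ s, ‖FourierTransform.fourier g (Real.log (n + 1))‖ ^ 2 * w (n + 1) / (n + 1))
      ≤ ∑ n ∈ Finset.range N,
          ‖FourierTransform.fourier g (Real.log (n + 1))‖ ^ 2 * w (n + 1) / (n + 1) := h1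
    _ = _ := h2
    _ ≤ ∑ k ∈ Finset.range N, S k * (C * (Real.exp 1 + 2)) := Finset.sum_le_sum h3
    _ = (∑ k ∈ Finset.range N, S k) * (C * (Real.exp 1 + 2)) := by rw [← Finset.sum_mul]
    _ ≤ B * (C * (Real.exp 1 + 2)) := by
        apply mul_le_mul_of_nonneg_right (hSsum N) (by positivity)
    _ = C * (Real.exp 1 + 2) * B := by ring
    _ ≤ C * (Real.exp 1 + 2) * B + 1 := by linarith
end

section
/- Let w_n be non-negative reals such that ∑_{n ≤ x} w_n ∼ C·x·(log x)^{-α} as x → ∞ for some constant C > 0 and α ∈ ℝ. Define μ = ∑_{n ≥ 2} (w_n/n)(δ_{log n} + δ_{−log n}). Then μ is (−α/2)-continuous at infinity: for every ε > 0 there exist R < ∞ and h > 0 such that μ([x, x+h]) ≤ ε(1+x²)^{−α/2} for all |x| ≥ R. -/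
/-!
The atoms of `μ` in `[y, y + h]`, `y ≥ 0`, sit at `log n` with `e^y ≤ n ≤ e^(y+h)` and have
mass `w_n / n ≤ e^(-y) w_n`, so `μ([y, y + h]) ≤ e^(-y) (W(e^(y+h)) - W(e^(y-h)))`. By the
asymptotics of `W`, the right-hand side is `∼ C (e^h - e^(-h)) y^(-α)`, and
`y^(-α) ∼ (1 + x²)^(-α/2)` when `y = x` or `y = -x - h`; choosing `h` with
`C (e^h - e^(-h)) < ε` gives the bound, and windows on the negative half-line are reflected to
the positive one.
-/

open Finset Real Filter

noncomputable def weightSum (w : ℕ → ℝ) (x : ℝ) : ℝ :=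
  ∑ n ∈ (range (⌊x⌋₊ + 1)).filter (fun n : ℕ => 1 ≤ n), w n

lemma weightSum_eq_sum_Ioc (w : ℕ → ℝ) (x : ℝ) :
    weightSum w x = ∑ n ∈ Ioc 0 ⌊x⌋₊, w n := by
  unfold weightSum
  congr 1
  ext n
  simp only [mem_filter, mem_range, mem_Ioc]
  omega

lemma weightSum_sub_weightSum (w : ℕ → ℝ) {a b : ℝ} (hab : a ≤ b) :
    weightSum w b - weightSum w a = ∑ n ∈ Ioc ⌊a⌋₊ ⌊b⌋₊, w n := by
  rw [weightSum_eq_sum_Ioc, weightSum_eq_sum_Ioc,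
    ← sum_Ioc_consecutive w (Nat.zero_le ⌊a⌋₊) (Nat.floor_mono hab), add_sub_cancel_left]

-- The mass that the atoms `δ_{log n}` of `μ` put on `[y, y + h]`.
noncomputable def logWindow (w : ℕ → ℝ) (y h : ℝ) (n : ℕ) : ℝ :=
  if 2 ≤ n ∧ y ≤ log n ∧ log n ≤ y + h then w n / n else 0

lemma ite_neg_log_eq_logWindow (w : ℕ → ℝ) (x h : ℝ) (n : ℕ) :
    (if 2 ≤ n ∧ x ≤ -log n ∧ -log n ≤ x + h then w n / n else 0) =
      logWindow w (-x - h) h n := by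
  unfold logWindow
  refine if_congr ⟨fun ⟨h2, h₁, h₂⟩ => ⟨h2, ?_, ?_⟩, fun ⟨h2, h₁, h₂⟩ => ⟨h2, ?_, ?_⟩⟩
    rfl rfl <;> linarith

lemma logWindow_eq_zero_of_add_nonpos (w : ℕ → ℝ) {y h : ℝ} (hyh : y + h ≤ 0) (n : ℕ) :
    logWindow w y h n = 0 :=
  if_neg fun ⟨h2, _, hle⟩ =>
    (Real.log_pos (by exact_mod_cast h2 : (1 : ℝ) < n)).not_ge (hle.trans hyh)

lemma logWindow_le (w : ℕ → ℝ) (hw : ∀ n, 0 ≤ w n) (y h : ℝ) (n : ℕ) :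
    logWindow w y h n ≤ exp (-y) * w n := by
  unfold logWindow
  split_ifs with hn
  · obtain ⟨h2, hy, -⟩ := hn
    have hn0 : (0 : ℝ) < n := by positivity
    calc w n / n ≤ w n / exp y :=
          div_le_div_of_nonneg_left (hw n) (exp_pos y) ((exp_le_exp.2 hy).trans_eq (exp_log hn0))
      _ = exp (-y) * w n := by rw [exp_neg, div_eq_inv_mul]
  · exact mul_nonneg (exp_pos _).le (hw n)

lemma logWindow_eq_zero_of_notMem (w : ℕ → ℝ) {y h : ℝ} (hh : 0 < h) {n : ℕ}
    (hn : n ∉ Ioc ⌊exp (y - h)⌋₊ ⌊exp (y + h)⌋₊) : logWindow w y h n = 0 := by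
  refine if_neg fun ⟨h2, hy, hyh⟩ => hn ?_
  have hn0 : (0 : ℝ) < n := by positivity
  rw [← exp_le_exp, exp_log hn0] at hy hyh
  refine mem_Ioc.2 ⟨?_, Nat.le_floor hyh⟩
  exact_mod_cast (Nat.floor_le (exp_pos _).le).trans_lt
    ((exp_lt_exp.2 (by linarith)).trans_le hy)

lemma tsum_logWindow_le (w : ℕ → ℝ) (hw : ∀ n, 0 ≤ w n) (y : ℝ) {h : ℝ} (hh : 0 < h) :
    ∑' n, logWindow w y h n ≤
      exp (-y) * (weightSum w (exp (y + h)) - weightSum w (exp (y - h))) := by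
  rw [tsum_eq_sum fun n hn => logWindow_eq_zero_of_notMem w hh hn,
    weightSum_sub_weightSum w (exp_le_exp.2 (by linarith)), mul_sum]
  exact sum_le_sum fun n _ => logWindow_le w hw y h n

lemma tendsto_div_add_const_atTop (c : ℝ) :
    Tendsto (fun y : ℝ => y / (y + c)) atTop (nhds 1) := by
  have hc : Tendsto (fun y : ℝ => 1 - c / (y + c)) atTop (nhds 1) := by
    simpa using tendsto_const_nhds.sub
      (tendsto_const_nhds.div_atTop (tendsto_atTop_add_const_right _ c tendsto_id))
  refine hc.congr' ?_
  filter_upwards [eventually_gt_atTop (-c)] with y hy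
  have : y + c ≠ 0 := by linarith
  field_simp
  ring

lemma tendsto_exp_neg_mul_rpow_mul_weightSum (w : ℕ → ℝ) {α C : ℝ} (hC : 0 < C)
    (hasymp : Tendsto (fun x => weightSum w x / (C * x * log x ^ (-α))) atTop (nhds 1))
    (c : ℝ) :
    Tendsto (fun y => exp (-y) * y ^ α * weightSum w (exp (y + c))) atTop
      (nhds (C * exp c)) := by
  have hW : Tendsto (fun y => weightSum w (exp (y + c)) /
      (C * exp (y + c) * (y + c) ^ (-α))) atTop (nhds 1) := by
    simpa [Function.comp_def, log_exp] using
      hasymp.comp (tendsto_exp_atTop.comp (tendsto_atTop_add_const_right _ c tendsto_id))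
  have hratio : Tendsto (fun y : ℝ => (y / (y + c)) ^ α) atTop (nhds 1) := by
    simpa using (tendsto_div_add_const_atTop c).rpow_const (p := α) (Or.inl one_ne_zero)
  have := (hW.mul hratio).const_mul (C * exp c)
  rw [mul_one, mul_one] at this
  refine this.congr' ?_
  filter_upwards [eventually_gt_atTop 0, eventually_gt_atTop (-c)] with y hy hyc
  have hyc' : 0 < y + c := by linarith
  have : 0 < (y + c) ^ α := rpow_pos_of_pos hyc' α
  rw [rpow_neg hyc'.le, div_rpow hy.le hyc'.le, exp_neg, exp_add]
  field_simp

lemma tendsto_one_add_sq_rpow_div_rpow (α c : ℝ) :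
    Tendsto (fun y : ℝ => (1 + (y + c) ^ 2) ^ (α / 2) / y ^ α) atTop (nhds 1) := by
  have hsq : Tendsto (fun y : ℝ => (1 + (y + c) ^ 2) / y ^ 2) atTop (nhds 1) := by
    have h : Tendsto (fun y : ℝ => 1 / y ^ 2 + ((y + c) / y) ^ 2) atTop (nhds 1) := by
      have hinv := (tendsto_const_nhds (x := (1 : ℝ))).div_atTop
        (tendsto_pow_atTop (α := ℝ) two_ne_zero)
      have hdiv : Tendsto (fun y : ℝ => (y + c) / y) atTop (nhds 1) := by
        simpa using (tendsto_div_add_const_atTop c).inv₀ one_ne_zero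
      simpa using hinv.add (hdiv.pow 2)
    refine h.congr' ?_
    filter_upwards [eventually_gt_atTop 0] with y hy
    field_simp
  have hrpow : Tendsto (fun y : ℝ => ((1 + (y + c) ^ 2) / y ^ 2) ^ (α / 2)) atTop (nhds 1) := by
    simpa using hsq.rpow_const (p := α / 2) (Or.inl one_ne_zero)
  refine hrpow.congr' ?_
  filter_upwards [eventually_gt_atTop 0] with y hy
  rw [div_rpow (by positivity) (by positivity), ← rpow_natCast_mul hy.le, Nat.cast_ofNat,
    mul_div_cancel₀ α two_ne_zero]

lemma tendsto_weightSum_window_div (w : ℕ → ℝ) {α C : ℝ} (hC : 0 < C)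
    (hasymp : Tendsto (fun x => weightSum w x / (C * x * log x ^ (-α))) atTop (nhds 1))
    (h c : ℝ) :
    Tendsto (fun y => exp (-y) * (weightSum w (exp (y + h)) - weightSum w (exp (y - h))) /
      (1 + (y + c) ^ 2) ^ (-α / 2)) atTop (nhds (C * (exp h - exp (-h)))) := by
  have hupper := tendsto_exp_neg_mul_rpow_mul_weightSum w hC hasymp h
  have hlower := tendsto_exp_neg_mul_rpow_mul_weightSum w hC hasymp (-h)
  have := ((hupper.sub hlower).mul (tendsto_one_add_sq_rpow_div_rpow α c))
  rw [mul_one, ← mul_sub] at this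
  refine this.congr' ?_
  filter_upwards [eventually_gt_atTop 0] with y hy
  have : 0 < y ^ α := rpow_pos_of_pos hy α
  have : 0 < (1 + (y + c) ^ 2) ^ (α / 2) := rpow_pos_of_pos (by positivity) _
  rw [neg_div, rpow_neg (by positivity), ← sub_eq_add_neg]
  field_simp

lemma exists_pos_mul_exp_sub_exp_neg_lt (C : ℝ) {ε : ℝ} (hε : 0 < ε) :
    ∃ h > 0, C * (exp h - exp (-h)) < ε := by
  have hcont : Tendsto (fun t => C * (exp t - exp (-t))) (nhdsWithin 0 (Set.Ioi 0)) (nhds 0) := by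
    have : Continuous fun t => C * (exp t - exp (-t)) := by fun_prop
    simpa using this.continuousWithinAt (s := Set.Ioi 0) (x := 0) |>.tendsto
  obtain ⟨h, hlt, hpos⟩ := ((hcont.eventually_lt_const hε).and self_mem_nhdsWithin).exists
  exact ⟨h, hpos, hlt⟩

/-- If `∑_{n ≤ x} w_n ∼ C x (log x)^{-α}`, then the measure
`μ = ∑_{n≥2} (w_n/n)(δ_{log n} + δ_{-log n})` is `(-α/2)`-continuous at infinity:
for every `ε > 0` there are `R` and `h > 0` with `μ([x,x+h]) ≤ ε(1+x²)^{-α/2}`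
for all `|x| ≥ R`. -/
theorem stmt_13 (w : ℕ → ℝ) (hw : ∀ n, 0 ≤ w n) (α : ℝ) (C : ℝ) (hC : 0 < C)
    (hasymp : Tendsto (fun x : ℝ =>
        (∑ n ∈ (Finset.range (⌊x⌋₊ + 1)).filter (fun n : ℕ => 1 ≤ n), w n)
          / (C * x * Real.log x ^ (-α))) atTop (nhds 1)) :
    ∀ ε : ℝ, 0 < ε → ∃ R h : ℝ, 0 < h ∧ ∀ x : ℝ, R ≤ |x| →
      (∑' n : ℕ,
        ((if 2 ≤ n ∧ x ≤ Real.log n ∧ Real.log n ≤ x + h then w n / n else 0)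
          + (if 2 ≤ n ∧ x ≤ -Real.log n ∧ -Real.log n ≤ x + h then w n / n else 0)))
        ≤ ε * (1 + x ^ 2) ^ (-α / 2) := by
  intro ε hε
  obtain ⟨h, hh, hlt⟩ := exists_pos_mul_exp_sub_exp_neg_lt C hε
  have hev (c : ℝ) : ∀ᶠ y in atTop,
      exp (-y) * (weightSum w (exp (y + h)) - weightSum w (exp (y - h))) ≤
        ε * (1 + (y + c) ^ 2) ^ (-α / 2) := by
    filter_upwards [(tendsto_weightSum_window_div w hC hasymp h c).eventually_lt_const hlt]
      with y hy
    exact (div_le_iff₀ (by positivity)).1 hy.le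
  obtain ⟨R, hR⟩ := eventually_atTop.1 ((hev 0).and (hev h))
  refine ⟨max R 0 + h, h, hh, fun x hx => ?_⟩
  simp_rw [ite_neg_log_eq_logWindow]
  change ∑' n, (logWindow w x h n + logWindow w (-x - h) h n) ≤ _
  rcases le_or_gt 0 x with hx0 | hx0
  · rw [abs_of_nonneg hx0] at hx
    have hxh : -x - h + h ≤ 0 := by linarith
    simp only [logWindow_eq_zero_of_add_nonpos w hxh, add_zero]
    simpa using (tsum_logWindow_le w hw x hh).trans (hR x (by linarith [le_max_left R 0])).1
  · rw [abs_of_neg hx0] at hx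
    have hxh : x + h ≤ 0 := by linarith [le_max_right R 0]
    simp only [logWindow_eq_zero_of_add_nonpos w hxh, zero_add]
    have := (tsum_logWindow_le w hw (-x - h) hh).trans
      (hR (-x - h) (by linarith [le_max_left R 0])).2
    rwa [show (-x - h + h) ^ 2 = x ^ 2 by ring] at this
end

section
/- For γ > 0 and complex sequences z, w in the open unit ball of ℓ², the reproducing kernel identity ∑_ν binom(|ν|+γ, ν) z^ν (w̄)^ν = (1 − ∑_j z_j w̄_j)^{−γ} holds, where the sum is over all finitely supported multi-indices ν, |ν| = ∑ν_j, binom(|ν|+γ,ν) = γ(γ+1)⋯(|ν|+γ−1)/(ν_1!ν_2!⋯), and both sides converge absolutely. -/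
/-!
Group the multi-indices by their degree `|ν| = m`. By the multinomial theorem, extended from
finitely many variables to summable sequences by truncation, the slice of degree `m` sums to
`tᵐ / m!` with `t = ∑ⱼ zⱼ w̄ⱼ`, so the whole sum is the binomial series of `(1 - t)^(-γ)`.
Absolute convergence follows in the same way from the slices of `|zⱼ w̄ⱼ|`: the binomial series
converges absolutely on the unit disc, and `∑ⱼ |zⱼ w̄ⱼ| ≤ (‖z‖² + ‖w‖²) / 2 < 1`.
-/

open Finset Complex Filter
open Finsupp (degree)
open scoped Nat

theorem ascPochhammer_eval_eq_prod_range {R : Type*} [CommSemiring R] (a : R) (n : ℕ) :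
    (ascPochhammer R n).eval a = ∏ i ∈ range n, (a + i) := by
  induction n with
  | zero => simp
  | succ n ih => rw [ascPochhammer_succ_eval, ih, prod_range_succ]

theorem Ring.choose_add_sub_one_eq_prod_range (a : ℂ) (n : ℕ) :
    Ring.choose (a + n - 1) n = (∏ i ∈ range n, (a + i)) * (n ! : ℂ)⁻¹ := by
  rw [← Ring.multichoose_eq, ← ascPochhammer_eval_eq_prod_range,
    ← Polynomial.ascPochhammer_smeval_eq_eval, ← Ring.factorial_nsmul_multichoose_eq_ascPochhammer,
    nsmul_eq_mul, mul_comm, inv_mul_cancel_left₀ (Nat.cast_ne_zero.2 n.factorial_ne_zero)]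

theorem hasFPowerSeriesOnBall_one_sub_cpow_neg (a : ℂ) :
    HasFPowerSeriesOnBall (fun u : ℂ ↦ (1 - u) ^ (-a))
      (.ofScalars ℂ fun n ↦ (∏ i ∈ range n, (a + i)) * (n ! : ℂ)⁻¹) 0 1 := by
  simpa [cpow_neg, Ring.choose_add_sub_one_eq_prod_range] using
    one_div_one_sub_cpow_hasFPowerSeriesOnBall_zero a

theorem hasSum_one_sub_cpow_neg (a : ℂ) {u : ℂ} (hu : ‖u‖ < 1) :
    HasSum (fun n ↦ (∏ i ∈ range n, (a + i)) * ((n ! : ℂ)⁻¹ * u ^ n)) ((1 - u) ^ (-a)) := by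
  simpa [FormalMultilinearSeries.ofScalars_apply_eq, mul_comm, mul_assoc] using
    (hasFPowerSeriesOnBall_one_sub_cpow_neg a).hasSum (y := u)
      (by rw [← ENNReal.coe_one, Metric.eball_coe]; simpa using hu)

theorem summable_norm_prod_range_add_mul_pow (a : ℂ) {r : ℝ} (hr0 : 0 ≤ r) (hr1 : r < 1) :
    Summable fun n ↦ ‖∏ i ∈ range n, (a + i)‖ * ((n ! : ℝ)⁻¹ * r ^ n) := by
  have hf := hasFPowerSeriesOnBall_one_sub_cpow_neg a
  have := FormalMultilinearSeries.summable_norm_apply _ (x := (r : ℂ))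
    (Metric.eball_subset_eball hf.r_le
      (by rw [← ENNReal.coe_one, Metric.eball_coe]; simpa [abs_of_nonneg hr0] using hr1))
  simpa [FormalMultilinearSeries.ofScalars_apply_eq, abs_of_nonneg hr0, mul_comm, mul_assoc]
    using this

section Multinomial

variable {ι K : Type*}

noncomputable def monomialDivFactorial [Field K] (b : ι → K) (ν : ι →₀ ℕ) : K :=
  (∏ j ∈ ν.support, ((ν j)! : K))⁻¹ * ∏ j ∈ ν.support, b j ^ ν j

theorem monomialDivFactorial_eq_of_support_subset [Field K] (b : ι → K) {ν : ι →₀ ℕ}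
    {s : Finset ι} (hν : ν.support ⊆ s) :
    monomialDivFactorial b ν = (∏ j ∈ s, ((ν j)! : K))⁻¹ * ∏ j ∈ s, b j ^ ν j := by
  have hzero : ∀ j ∈ s, j ∉ ν.support → ν j = 0 := fun j _ hj ↦ Finsupp.notMem_support_iff.1 hj
  rw [monomialDivFactorial, prod_subset hν fun j hs hj ↦ by simp [hzero j hs hj],
    prod_subset hν fun j hs hj ↦ by simp [hzero j hs hj]]

theorem sum_finsuppAntidiag_eq_sum_piAntidiag {μ β : Type*} [DecidableEq ι] [AddCommMonoid μ]
    [HasAntidiagonal μ] [DecidableEq μ] [AddCommMonoid β] (s : Finset ι) (m : μ)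
    (F : (ι → μ) → β) :
    ∑ ν ∈ finsuppAntidiag s m, F ν = ∑ f ∈ piAntidiag s m, F f := by
  rw [finsuppAntidiag, sum_map, ← sum_attach (piAntidiag s m) F]
  rfl

theorem inv_prod_factorial_eq_multinomial_mul [Field K] [CharZero K] (s : Finset ι)
    (f : ι → ℕ) : (∏ j ∈ s, ((f j)! : K))⁻¹ = Nat.multinomial s f * ((∑ j ∈ s, f j)! : K)⁻¹ := by
  rw [← Nat.multinomial_spec s f]
  push_cast
  rw [mul_inv, mul_comm, inv_mul_cancel_right₀ (by simp [(Nat.multinomial_pos s f).ne'])]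

theorem sum_finsuppAntidiag_monomialDivFactorial [DecidableEq ι] [Field K] [CharZero K]
    (b : ι → K) (s : Finset ι) (m : ℕ) :
    ∑ ν ∈ finsuppAntidiag s m, monomialDivFactorial b ν = (m ! : K)⁻¹ * (∑ j ∈ s, b j) ^ m := by
  rw [sum_pow_eq_sum_piAntidiag, mul_sum, sum_congr rfl fun ν hν ↦
    monomialDivFactorial_eq_of_support_subset b (mem_finsuppAntidiag.1 hν).2]
  rw [sum_finsuppAntidiag_eq_sum_piAntidiag s m
    fun f ↦ (∏ j ∈ s, ((f j)! : K))⁻¹ * ∏ j ∈ s, b j ^ f j]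
  refine sum_congr rfl fun f hf ↦ ?_
  rw [inv_prod_factorial_eq_multinomial_mul, (mem_piAntidiag.1 hf).1]
  ring

theorem monomialDivFactorial_nonneg {b : ι → ℝ} (hb : ∀ j, 0 ≤ b j) (ν : ι →₀ ℕ) :
    0 ≤ monomialDivFactorial b ν :=
  mul_nonneg (inv_nonneg.2 (prod_nonneg fun _ _ ↦ by positivity))
    (prod_nonneg fun j _ ↦ pow_nonneg (hb j) _)

theorem norm_monomialDivFactorial [RCLike K] (b : ι → K) (ν : ι →₀ ℕ) :
    ‖monomialDivFactorial b ν‖ = monomialDivFactorial (fun j ↦ ‖b j‖) ν := by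
  simp [monomialDivFactorial, norm_prod]

theorem tendsto_subtype_finsuppAntidiag_range (m : ℕ) :
    Tendsto (fun n ↦ (finsuppAntidiag (range n) m).subtype (fun ν ↦ degree ν = m))
      atTop atTop := by
  refine tendsto_atTop_finset_of_monotone (fun n n' hnn' ν hν ↦ ?_) fun ν ↦ ?_
  · rw [mem_subtype, mem_finsuppAntidiag'] at hν ⊢
    exact ⟨hν.1, hν.2.trans (range_subset_range.2 hnn')⟩
  · obtain ⟨n, hn⟩ := exists_nat_subset_range ν.1.support
    exact ⟨n, mem_subtype.2 (mem_finsuppAntidiag'.2 ⟨ν.2, hn⟩)⟩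

theorem sum_subtype_finsuppAntidiag_range_monomialDivFactorial [Field K] [CharZero K]
    (b : ℕ → K) (n m : ℕ) :
    ∑ ν ∈ (finsuppAntidiag (range n) m).subtype (fun ν ↦ degree ν = m),
      monomialDivFactorial b ν = (m ! : K)⁻¹ * (∑ j ∈ range n, b j) ^ m := by
  rw [← sum_finsuppAntidiag_monomialDivFactorial]
  exact sum_subtype_of_mem _ fun ν hν ↦ (mem_finsuppAntidiag'.1 hν).1

theorem summable_monomialDivFactorial_of_nonneg {b : ℕ → ℝ} (hb0 : ∀ j, 0 ≤ b j)
    (hb : Summable b) (m : ℕ) :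
    Summable fun ν : {ν : ℕ →₀ ℕ // degree ν = m} ↦ monomialDivFactorial b ν := by
  refine summable_of_sum_le (c := (m ! : ℝ)⁻¹ * (∑' j, b j) ^ m)
    (fun ν ↦ monomialDivFactorial_nonneg hb0 ν) fun u ↦ ?_
  obtain ⟨n, hn⟩ := ((tendsto_subtype_finsuppAntidiag_range m).eventually_ge_atTop u).exists
  calc ∑ ν ∈ u, monomialDivFactorial b ν
      ≤ ∑ ν ∈ (finsuppAntidiag (range n) m).subtype (fun ν ↦ degree ν = m),
          monomialDivFactorial b ν :=
        sum_le_sum_of_subset_of_nonneg hn fun ν _ _ ↦ monomialDivFactorial_nonneg hb0 ν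
    _ = (m ! : ℝ)⁻¹ * (∑ j ∈ range n, b j) ^ m :=
        sum_subtype_finsuppAntidiag_range_monomialDivFactorial b n m
    _ ≤ (m ! : ℝ)⁻¹ * (∑' j, b j) ^ m := by
        gcongr
        · exact sum_nonneg fun j _ ↦ hb0 j
        · exact hb.sum_le_tsum _ fun j _ ↦ hb0 j

theorem hasSum_monomialDivFactorial [RCLike K] {b : ℕ → K} (hb : Summable fun j ↦ ‖b j‖)
    (m : ℕ) :
    HasSum (fun ν : {ν : ℕ →₀ ℕ // degree ν = m} ↦ monomialDivFactorial b ν)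
      ((m ! : K)⁻¹ * (∑' j, b j) ^ m) := by
  have hsum : Summable fun ν : {ν : ℕ →₀ ℕ // degree ν = m} ↦ monomialDivFactorial b ν :=
    .of_norm <| by
      simpa only [norm_monomialDivFactorial] using
        summable_monomialDivFactorial_of_nonneg (fun j ↦ norm_nonneg (b j)) hb m
  convert hsum.hasSum
  refine tendsto_nhds_unique ?_ (hsum.hasSum.comp (tendsto_subtype_finsuppAntidiag_range m))
  simp only [Function.comp_def, sum_subtype_finsuppAntidiag_range_monomialDivFactorial]
  exact (hb.of_norm.hasSum.tendsto_sum_nat.pow m).const_mul _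

theorem summable_norm_mul_monomialDivFactorial [RCLike K] {b : ℕ → K}
    (hb : Summable fun j ↦ ‖b j‖) {c : ℕ → K}
    (hc : Summable fun m ↦ ‖c m‖ * ((m ! : ℝ)⁻¹ * (∑' j, ‖b j‖) ^ m)) :
    Summable fun ν : ℕ →₀ ℕ ↦ ‖c (degree ν) * monomialDivFactorial b ν‖ := by
  have hfiber (m : ℕ) : HasSum (fun ν : {ν : ℕ →₀ ℕ // degree ν = m} ↦
      ‖c (degree ν.1) * monomialDivFactorial b ν‖) (‖c m‖ * ((m ! : ℝ)⁻¹ * (∑' j, ‖b j‖) ^ m)) := by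
    have := (hasSum_monomialDivFactorial (b := fun j ↦ ‖b j‖) (by simpa using hb) m).mul_left ‖c m‖
    refine this.congr_fun fun ν ↦ ?_
    rw [norm_mul, norm_monomialDivFactorial, ν.2]
  rw [← (Equiv.sigmaFiberEquiv (degree : (ℕ →₀ ℕ) → ℕ)).summable_iff]
  exact (summable_sigma_of_nonneg fun _ ↦ norm_nonneg _).2
    ⟨fun m ↦ (hfiber m).summable, hc.congr fun m ↦ (hfiber m).tsum_eq.symm⟩

theorem tsum_mul_monomialDivFactorial [RCLike K] {b : ℕ → K}
    (hb : Summable fun j ↦ ‖b j‖) {c : ℕ → K}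
    (hc : Summable fun m ↦ ‖c m‖ * ((m ! : ℝ)⁻¹ * (∑' j, ‖b j‖) ^ m)) :
    ∑' ν, c (degree ν) * monomialDivFactorial b ν
      = ∑' m, c m * ((m ! : K)⁻¹ * (∑' j, b j) ^ m) := by
  set e := Equiv.sigmaFiberEquiv (degree : (ℕ →₀ ℕ) → ℕ)
  have hsum := e.summable_iff.2 (summable_norm_mul_monomialDivFactorial hb hc).of_norm
  refine (e.tsum_eq _).symm.trans (hsum.tsum_sigma.trans (tsum_congr fun m ↦ ?_))
  refine HasSum.tsum_eq ?_
  have := (hasSum_monomialDivFactorial hb m).mul_left (c m)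
  refine this.congr_fun fun ν ↦ ?_
  simp [e, ν.2]

end Multinomial

section CauchySchwarz

variable {ι E : Type*} [NonUnitalSeminormedRing E] {z w : ι → E}

theorem norm_mul_le_half_add_sq (x y : E) : ‖x * y‖ ≤ (‖x‖ ^ 2 + ‖y‖ ^ 2) / 2 := by
  nlinarith [norm_mul_le x y, sq_nonneg (‖x‖ - ‖y‖)]

theorem summable_norm_mul_of_summable_sq (hz : Summable fun j ↦ ‖z j‖ ^ 2)
    (hw : Summable fun j ↦ ‖w j‖ ^ 2) : Summable fun j ↦ ‖z j * w j‖ :=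
  .of_nonneg_of_le (fun _ ↦ norm_nonneg _) (fun j ↦ norm_mul_le_half_add_sq (z j) (w j))
    ((hz.add hw).div_const 2)

theorem tsum_norm_mul_lt_one (hz : Summable fun j ↦ ‖z j‖ ^ 2) (hz1 : ∑' j, ‖z j‖ ^ 2 < 1)
    (hw : Summable fun j ↦ ‖w j‖ ^ 2) (hw1 : ∑' j, ‖w j‖ ^ 2 < 1) :
    ∑' j, ‖z j * w j‖ < 1 := by
  have hle := (summable_norm_mul_of_summable_sq hz hw).tsum_le_tsum
    (fun j ↦ norm_mul_le_half_add_sq (z j) (w j)) ((hz.add hw).div_const 2)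
  rw [tsum_div_const, (hz.tsum_add hw)] at hle
  linarith

end CauchySchwarz

theorem stmt_17_general (γ : ℝ) (z w : ℕ → ℂ)
    (hz : Summable (fun j => ‖z j‖ ^ 2)) (hz1 : (∑' j : ℕ, ‖z j‖ ^ 2) < 1)
    (hw : Summable (fun j => ‖w j‖ ^ 2)) (hw1 : (∑' j : ℕ, ‖w j‖ ^ 2) < 1) :
    Summable (fun ν : ℕ →₀ ℕ =>
      ‖(((∏ i ∈ Finset.range (ν.sum fun _ k => k), (γ + i)) /
            ∏ j ∈ ν.support, ((Nat.factorial (ν j)) : ℝ)) : ℂ) *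
        (∏ j ∈ ν.support, z j ^ ν j) * (∏ j ∈ ν.support, (starRingEnd ℂ) (w j) ^ ν j)‖) ∧
    (∑' ν : ℕ →₀ ℕ,
        (((∏ i ∈ Finset.range (ν.sum fun _ k => k), (γ + i)) /
            ∏ j ∈ ν.support, ((Nat.factorial (ν j)) : ℝ)) : ℂ) *
          (∏ j ∈ ν.support, z j ^ ν j) * (∏ j ∈ ν.support, (starRingEnd ℂ) (w j) ^ ν j))
      = (1 - ∑' j : ℕ, z j * (starRingEnd ℂ) (w j)) ^ (-(γ : ℂ)) := by
  set a : ℕ → ℂ := fun j ↦ z j * (starRingEnd ℂ) (w j)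
  set c : ℕ → ℂ := fun m ↦ ∏ i ∈ range m, ((γ : ℂ) + i)
  have hw' : Summable fun j ↦ ‖(starRingEnd ℂ) (w j)‖ ^ 2 := by simpa using hw
  have ha : Summable fun j ↦ ‖a j‖ := summable_norm_mul_of_summable_sq hz hw'
  have ha1 : ∑' j, ‖a j‖ < 1 := tsum_norm_mul_lt_one hz hz1 hw' (by simpa using hw1)
  have hc : Summable fun m ↦ ‖c m‖ * ((m ! : ℝ)⁻¹ * (∑' j, ‖a j‖) ^ m) :=
    summable_norm_prod_range_add_mul_pow γ (tsum_nonneg fun _ ↦ norm_nonneg _) ha1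
  have hterm (ν : ℕ →₀ ℕ) :
      (((∏ i ∈ range (ν.sum fun _ k ↦ k), (γ + i)) / ∏ j ∈ ν.support, ((ν j)! : ℝ)) : ℂ) *
          (∏ j ∈ ν.support, z j ^ ν j) * (∏ j ∈ ν.support, (starRingEnd ℂ) (w j) ^ ν j)
        = c (degree ν) * monomialDivFactorial a ν := by
    rw [show (ν.sum fun _ k ↦ k) = degree ν from rfl]
    simp only [monomialDivFactorial, a, c, mul_pow, prod_mul_distrib]
    push_cast
    ring
  simp only [hterm]
  refine ⟨summable_norm_mul_monomialDivFactorial ha hc, ?_⟩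
  rw [tsum_mul_monomialDivFactorial ha hc]
  exact (hasSum_one_sub_cpow_neg γ ((norm_tsum_le_tsum_norm ha).trans_lt ha1)).tsum_eq

/-- Reproducing kernel of the Besov–Sobolev space on the infinite-dimensional ball:
for `γ > 0` and `z, w` in the open unit ball of `ℓ²`,
`∑_ν binom(|ν|+γ, ν) z^ν w̄^ν = (1 − ∑_j z_j w̄_j)^{-γ}`, the sum being over all
finitely supported multi-indices, with absolute convergence. -/
theorem stmt_17 (γ : ℝ) (hγ : 0 < γ) (z w : ℕ → ℂ)
    (hz : Summable (fun j => ‖z j‖ ^ 2)) (hz1 : (∑' j : ℕ, ‖z j‖ ^ 2) < 1)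
    (hw : Summable (fun j => ‖w j‖ ^ 2)) (hw1 : (∑' j : ℕ, ‖w j‖ ^ 2) < 1) :
    Summable (fun ν : ℕ →₀ ℕ =>
      ‖(((∏ i ∈ Finset.range (ν.sum fun _ k => k), (γ + i)) /
            ∏ j ∈ ν.support, ((Nat.factorial (ν j)) : ℝ)) : ℂ) *
        (∏ j ∈ ν.support, z j ^ ν j) * (∏ j ∈ ν.support, (starRingEnd ℂ) (w j) ^ ν j)‖) ∧
    (∑' ν : ℕ →₀ ℕ,
        (((∏ i ∈ Finset.range (ν.sum fun _ k => k), (γ + i)) /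
            ∏ j ∈ ν.support, ((Nat.factorial (ν j)) : ℝ)) : ℂ) *
          (∏ j ∈ ν.support, z j ^ ν j) * (∏ j ∈ ν.support, (starRingEnd ℂ) (w j) ^ ν j))
      = (1 - ∑' j : ℕ, z j * (starRingEnd ℂ) (w j)) ^ (-(γ : ℂ)) :=
  stmt_17_general γ z w hz hz1 hw hw1
end

section
/- Let α ≤ 1, α ≠ 0, and suppose that for every bounded interval I there exists C > 0 such that for all Dirichlet polynomials F(s) = ∑_{n=1}^N a_n n^{-s} (with a_n/√w_n square-summable), the local embedding ∫_{(1/2,1]×I} |F(s)|² (σ−1/2)^{−α−1} dm(s) ≤ C ∑ |a_n|²/w_n holds (case α < 0). Then there exists C' such that ∑_{n ∈ (e^k, e^{k+1})} w_n ≤ C'·e^k·k^{-α} for all k ≥ 1, by testing the embedding on the functions g_k(s) = ∑_{n ∈ (e^k, e^{k+1})} w_n n^{-s}. -/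
/-!
Test the embedding on the box `(1/2, 1] × (-1/2, 1/2)` against
`g_k(s) = ∑_{e^k < n < e^{k+1}} w_n n^{-s}`, whose `ℋ_w`-norm squared is the block sum `S_k`.
Every frequency `log n` of `g_k` lies within `1/2` of `k + 1/2`, so after rotating by
`e^{it(k+1/2)}` each term has real part at least `cos(1/4) e^{-(k+2)/2} w_n` on the strip
`1/2 < σ ≤ 1/2 + 1/(4k)`. Thus `|g_k|² ≥ cos(1/4)² e^{-(k+2)} S_k²` there, and integrating the
weight `(σ - 1/2)^{-α-1}` over the strip gives `e^{-k} k^{α} S_k² ≲ C S_k`.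
-/

open Finset Real MeasureTheory Complex

noncomputable def dirichletPoly (N : ℕ) (c : ℕ → ℂ) (s : ℂ) : ℂ :=
  ∑ n ∈ Icc 1 N, c n * (n : ℂ) ^ (-s)

theorem continuous_dirichletPoly (N : ℕ) (c : ℕ → ℂ) : Continuous (dirichletPoly N c) :=
  continuous_finsetSum _ fun n hn =>
    continuous_const.mul <| continuous_neg.const_cpow <| Or.inl <|
      Nat.cast_ne_zero.mpr (by grind)

theorem re_cexp_mul_natCast_cpow {n : ℕ} (hn : n ≠ 0) (σ t θ : ℝ) :
    (cexp (t * θ * I) * (n : ℂ) ^ (-(σ + t * I))).re =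
      Real.exp (-(σ * Real.log n)) * Real.cos (t * (θ - Real.log n)) := by
  rw [cpow_def_of_ne_zero (Nat.cast_ne_zero.mpr hn), ← ofReal_natCast,
    ← ofReal_log n.cast_nonneg, ← Complex.exp_add, Complex.exp_re]
  simp only [add_re, add_im, mul_re, mul_im, neg_re, neg_im, ofReal_re, ofReal_im, I_re, I_im]
  ring_nf

theorem exp_mul_cos_mul_sum_le_norm_dirichletPoly {N : ℕ} {a : ℕ → ℝ} (ha : ∀ n, 0 ≤ a n)
    {θ r σ t : ℝ} (hσ : 0 ≤ σ) (htr : |t| * r ≤ π / 2)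
    (hsupp : ∀ n ∈ Icc 1 N, a n ≠ 0 → |Real.log n - θ| ≤ r) :
    Real.exp (-(σ * (θ + r))) * Real.cos (t * r) * ∑ n ∈ Icc 1 N, a n ≤
      ‖dirichletPoly N (fun n => a n) (σ + t * I)‖ := by
  rw [← one_mul ‖_‖, ← norm_exp_ofReal_mul_I (t * θ), ← norm_mul, ofReal_mul, mul_sum]
  refine le_trans ?_ (re_le_norm _)
  rw [dirichletPoly, mul_sum, re_sum]
  refine sum_le_sum fun n hn => ?_
  rcases eq_or_ne (a n) 0 with h0 | h0
  · simp [h0]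
  have hlog := hsupp n hn h0
  have hr : 0 ≤ r := (abs_nonneg _).trans hlog
  rw [mul_left_comm, re_ofReal_mul, re_cexp_mul_natCast_cpow (by grind), mul_comm (a n),
    ← Real.cos_abs (t * r), abs_mul, abs_of_nonneg hr]
  have hcos : 0 ≤ Real.cos (|t| * r) :=
    Real.cos_nonneg_of_mem_Icc ⟨by linarith [pi_pos, mul_nonneg (abs_nonneg t) hr], htr⟩
  have := ha n
  gcongr
  · linarith [(abs_le.mp hlog).2]
  · rw [← Real.cos_abs (t * _), abs_mul, abs_sub_comm]
    exact Real.cos_le_cos_of_nonneg_of_le_pi (by positivity) (by linarith [pi_pos])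
      (by gcongr)

theorem integrableOn_Ioc_rpow_sub {β : ℝ} (hβ : -1 < β) (σ₀ σ₁ : ℝ) :
    IntegrableOn (fun σ => (σ - σ₀) ^ β) (Set.Ioc σ₀ σ₁) := by
  have h := (intervalIntegral.intervalIntegrable_rpow' (a := 0) (b := σ₁ - σ₀) hβ).comp_sub_right σ₀
  rw [zero_add, sub_add_cancel] at h
  exact h.def'.mono_set Set.Ioc_subset_uIoc

theorem setIntegral_Ioc_rpow_sub {β η : ℝ} (hβ : -1 < β) (hη : 0 ≤ η) (σ₀ : ℝ) :
    ∫ σ in Set.Ioc σ₀ (σ₀ + η), (σ - σ₀) ^ β = η ^ (β + 1) / (β + 1) := by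
  rw [← intervalIntegral.integral_of_le (by linarith),
    intervalIntegral.integral_comp_sub_right (· ^ β), sub_self, add_sub_cancel_left,
    integral_rpow (Or.inl hβ), zero_rpow (by linarith), sub_zero]

theorem integrableOn_setIntegral_mul_rpow_sub {f : ℝ → ℝ → ℝ}
    (hf : Continuous (Function.uncurry f)) {β : ℝ} (hβ : -1 < β) (σ₀ σ₁ a b : ℝ) :
    IntegrableOn (fun σ => (∫ t in Set.Ioo a b, f σ t) * (σ - σ₀) ^ β) (Set.Ioc σ₀ σ₁) := by
  obtain ⟨M, hM⟩ := (isCompact_Icc.prod isCompact_Icc).exists_bound_of_continuousOn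
    (s := Set.Icc σ₀ σ₁ ×ˢ Set.Icc a b) hf.continuousOn
  refine (integrableOn_Ioc_rpow_sub hβ σ₀ σ₁).bdd_mul (c := M * volume.real (Set.Ioo a b))
    hf.stronglyMeasurable.integral_prod_right.aestronglyMeasurable
    ((ae_restrict_iff' measurableSet_Ioc).mpr (Filter.Eventually.of_forall fun σ hσ => ?_))
  refine norm_setIntegral_le_of_norm_le_const measure_Ioo_lt_top fun t ht => ?_
  exact hM (σ, t) ⟨Set.Ioc_subset_Icc_self hσ, Set.Ioo_subset_Icc_self ht⟩

theorem le_setIntegral_setIntegral_norm_sq_mul_rpow {F : ℂ → ℂ} (hF : Continuous F)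
    {σ₀ σ₁ η a b β m : ℝ} (hβ : -1 < β) (hη : 0 ≤ η) (hησ : σ₀ + η ≤ σ₁) (hab : a ≤ b)
    (hm : 0 ≤ m) (hlow : ∀ σ ∈ Set.Ioc σ₀ (σ₀ + η), ∀ t ∈ Set.Ioo a b, m ≤ ‖F (σ + t * I)‖) :
    m ^ 2 * (b - a) * (η ^ (β + 1) / (β + 1)) ≤
      ∫ σ in Set.Ioc σ₀ σ₁, ∫ t in Set.Ioo a b, ‖F (σ + t * I)‖ ^ 2 * (σ - σ₀) ^ β := by
  have hFσt : Continuous fun p : ℝ × ℝ => ‖F (p.1 + p.2 * I)‖ ^ 2 := by fun_prop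
  have hrpow : ∀ σ ∈ Set.Ioc σ₀ σ₁, 0 ≤ (σ - σ₀) ^ β := fun σ hσ =>
    rpow_nonneg (sub_nonneg.mpr hσ.1.le) β
  simp_rw [integral_mul_const]
  have hint := integrableOn_setIntegral_mul_rpow_sub (f := fun σ t => ‖F (σ + t * I)‖ ^ 2) hFσt
    hβ σ₀ σ₁ a b
  have hsub : Set.Ioc σ₀ (σ₀ + η) ⊆ Set.Ioc σ₀ σ₁ := Set.Ioc_subset_Ioc_right hησ
  calc m ^ 2 * (b - a) * (η ^ (β + 1) / (β + 1))
      = ∫ σ in Set.Ioc σ₀ (σ₀ + η), m ^ 2 * (b - a) * (σ - σ₀) ^ β := by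
        rw [integral_const_mul, setIntegral_Ioc_rpow_sub hβ hη]
    _ ≤ ∫ σ in Set.Ioc σ₀ (σ₀ + η),
          (∫ t in Set.Ioo a b, ‖F (σ + t * I)‖ ^ 2) * (σ - σ₀) ^ β := by
        refine setIntegral_mono_on ((integrableOn_Ioc_rpow_sub hβ _ _).const_mul _)
          (hint.mono_set hsub) measurableSet_Ioc fun σ hσ => ?_
        have hlow_sq := setIntegral_ge_of_const_le_real measurableSet_Ioo
          measure_Ioo_lt_top.ne (fun t ht => pow_le_pow_left₀ hm (hlow σ hσ t ht) 2)
          (((hFσt.comp (Continuous.prodMk_right σ)).integrableOn_Icc (μ := volume)).mono_set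
            Set.Ioo_subset_Icc_self)
        rw [Real.volume_real_Ioo_of_le hab] at hlow_sq
        gcongr
        exact hrpow σ (hsub hσ)
    _ ≤ ∫ σ in Set.Ioc σ₀ σ₁, (∫ t in Set.Ioo a b, ‖F (σ + t * I)‖ ^ 2) * (σ - σ₀) ^ β :=
        setIntegral_mono_set hint
          ((ae_restrict_iff' measurableSet_Ioc).mpr (Filter.Eventually.of_forall fun σ hσ =>
            mul_nonneg (setIntegral_nonneg measurableSet_Ioo fun _ _ => by positivity)
              (hrpow σ hσ)))
          hsub.eventuallyLE

noncomputable def expBlock (k : ℕ) : Finset ℕ :=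
  (range (⌊Real.exp (k + 1)⌋₊ + 1)).filter
    (fun n : ℕ => Real.exp k < (n : ℝ) ∧ (n : ℝ) < Real.exp (k + 1))

theorem expBlock_subset_Icc (k : ℕ) : expBlock k ⊆ Icc 1 ⌊Real.exp (k + 1)⌋₊ := fun n hn => by
  obtain ⟨hn, hlo, -⟩ := mem_filter.mp hn
  have : 0 < n := by exact_mod_cast (Real.exp_pos k).trans hlo
  exact mem_Icc.mpr ⟨this, Nat.lt_succ_iff.mp (mem_range.mp hn)⟩

theorem abs_log_sub_le_of_mem_expBlock {k n : ℕ} (hn : n ∈ expBlock k) :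
    |Real.log n - (k + 1/2)| ≤ 1/2 := by
  obtain ⟨-, hlo, hhi⟩ := mem_filter.mp hn
  have hn0 : (0 : ℝ) < n := (Real.exp_pos _).trans hlo
  have := (lt_log_iff_exp_lt hn0).mpr hlo
  have := (log_lt_iff_lt_exp hn0).mpr hhi
  exact abs_le.mpr ⟨by linarith, by linarith⟩

theorem sum_norm_sq_indicator_div_self {ι : Type*} {s t : Finset ι} (h : t ⊆ s) (w : ι → ℝ) :
    ∑ i ∈ s, ‖(((t : Set ι).indicator w i : ℝ) : ℂ)‖ ^ 2 / w i = ∑ i ∈ t, w i := by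
  rw [← sum_indicator_subset w h]
  refine sum_congr rfl fun i _ => ?_
  rw [norm_real, norm_eq_abs, sq_abs, sq]
  -- `mul_self_div_self` also covers `w i = 0`, by the convention `0 / 0 = 0`
  by_cases hi : i ∈ t <;> simp [hi, mul_self_div_self]

theorem cos_quarter_pos : 0 < Real.cos (1/4) :=
  Real.cos_pos_of_mem_Ioo ⟨by linarith [pi_pos], by linarith [pi_gt_three]⟩

theorem exp_mul_cos_mul_sum_expBlock_le_norm_dirichletPoly {w : ℕ → ℝ} (hw : ∀ n, 0 ≤ w n)
    {k : ℕ} {η σ t : ℝ} (hη : η * (k + 1) ≤ 1/2) (hσ : σ ∈ Set.Ioc (1/2) (1/2 + η))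
    (ht : |t| ≤ 1/2) :
    Real.exp (-(k + 2) / 2) * Real.cos (1/4) * ∑ n ∈ expBlock k, w n ≤
      ‖dirichletPoly ⌊Real.exp (k + 1)⌋₊ (fun n => (((expBlock k : Set ℕ).indicator w n : ℝ) : ℂ))
        (σ + t * I)‖ := by
  have hsupp : ∀ n ∈ Icc 1 ⌊Real.exp (k + 1)⌋₊, (expBlock k : Set ℕ).indicator w n ≠ 0 →
      |Real.log n - (k + 1/2)| ≤ 1/2 := fun n _ hn =>
    abs_log_sub_le_of_mem_expBlock (Set.mem_of_indicator_ne_zero hn)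
  calc Real.exp (-(k + 2) / 2) * Real.cos (1/4) * ∑ n ∈ expBlock k, w n
      ≤ Real.exp (-(σ * (k + 1/2 + 1/2))) * Real.cos (t * (1/2)) *
          ∑ n ∈ Icc 1 ⌊Real.exp (k + 1)⌋₊, (expBlock k : Set ℕ).indicator w n := by
        rw [sum_indicator_subset w (expBlock_subset_Icc k)]
        have := sum_nonneg fun n (_ : n ∈ expBlock k) => hw n
        have := cos_quarter_pos
        gcongr
        · nlinarith [hσ.2]
        · rw [← Real.cos_abs (t * _), abs_mul]
          exact Real.cos_le_cos_of_nonneg_of_le_pi (by positivity) (by linarith [pi_gt_three])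
            (by norm_num; linarith)
    _ ≤ _ := exp_mul_cos_mul_sum_le_norm_dirichletPoly (Set.indicator_nonneg fun n _ => hw n)
          (by linarith [hσ.1]) (by linarith [pi_gt_three]) hsupp

theorem le_div_of_mul_sq_le_mul {K S C : ℝ} (hK : 0 < K) (hC : 0 ≤ C) (h : K * S ^ 2 ≤ C * S) :
    S ≤ C / K := by
  rw [le_div_iff₀ hK]
  nlinarith

/-- If the local embedding of `ℋ_w` into `D_α(ℂ_{1/2})` holds (case `α < 0`), i.e. for
every bounded interval the weighted area integral of any Dirichlet polynomial is
controlled by its `ℋ_w` norm, then the block sums satisfy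
`∑_{n ∈ (e^k, e^{k+1})} w_n ≤ C'·e^k·k^{-α}`. -/
theorem stmt_19 (w : ℕ → ℝ) (hw : ∀ n, 0 ≤ w n) (α : ℝ) (hα : α < 0)
    (hembed : ∀ a b : ℝ, a < b → ∃ C : ℝ, 0 < C ∧ ∀ (N : ℕ) (c : ℕ → ℂ),
      (∫ σ in Set.Ioc (1/2 : ℝ) 1, ∫ t in Set.Ioo a b,
          ‖∑ n ∈ Finset.Icc 1 N, c n * ((n : ℂ) ^ (-((σ : ℂ) + (t : ℂ) * Complex.I)))‖ ^ 2
            * (σ - 1/2) ^ (-α - 1))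
        ≤ C * ∑ n ∈ Finset.Icc 1 N, ‖c n‖ ^ 2 / w n) :
    ∃ C' : ℝ, 0 < C' ∧ ∀ k : ℕ, 1 ≤ k →
      ∑ n ∈ (Finset.range (⌊Real.exp (k + 1)⌋₊ + 1)).filter
          (fun n : ℕ => Real.exp k < (n : ℝ) ∧ (n : ℝ) < Real.exp (k + 1)), w n
        ≤ C' * Real.exp k * (k : ℝ) ^ (-α) := by
  obtain ⟨C, hC, hbd⟩ := hembed (-(1/2)) (1/2) (by norm_num)
  have hcos := cos_quarter_pos
  refine ⟨C * (-α) * Real.exp 2 * 4 ^ (-α) / Real.cos (1/4) ^ 2,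
    div_pos (mul_pos (mul_pos (mul_pos hC (neg_pos.mpr hα)) (Real.exp_pos 2))
      (rpow_pos_of_pos four_pos _)) (pow_pos hcos 2), fun k hk => ?_⟩
  change ∑ n ∈ expBlock k, w n ≤ _
  have hk' : (1 : ℝ) ≤ k := by exact_mod_cast hk
  have hS := sum_nonneg fun n (_ : n ∈ expBlock k) => hw n
  have hη : (4 * (k : ℝ))⁻¹ * (k + 1) ≤ 1/2 := by
    rw [inv_mul_le_iff₀ (by positivity)]
    linarith
  have key := (le_setIntegral_setIntegral_norm_sq_mul_rpow (continuous_dirichletPoly _ _)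
    (β := -α - 1) (σ₁ := 1) (by linarith) (by positivity)
    (by nlinarith [inv_pos.mpr (by positivity : (0 : ℝ) < 4 * k)]) (by norm_num) (by positivity)
    fun σ hσ t ht => exp_mul_cos_mul_sum_expBlock_le_norm_dirichletPoly hw hη hσ
      (abs_le.mpr ⟨ht.1.le, ht.2.le⟩)).trans (hbd _ _)
  rw [sum_norm_sq_indicator_div_self (expBlock_subset_Icc k), show -α - 1 + 1 = -α by ring] at key
  have hexp : Real.exp (-(k + 2) / 2) ^ 2 = (Real.exp 2 * Real.exp k)⁻¹ := by
    rw [sq, ← Real.exp_add, ← Real.exp_add, ← Real.exp_neg]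
    ring_nf
  calc ∑ n ∈ expBlock k, w n
      ≤ C / (Real.exp (-(k + 2) / 2) ^ 2 * Real.cos (1/4) ^ 2 *
          ((4 * (k : ℝ))⁻¹ ^ (-α) / (-α))) :=
        le_div_of_mul_sq_le_mul
          (mul_pos (by positivity) (div_pos (by positivity) (neg_pos.mpr hα))) hC.le
          (by linarith)
    _ = _ := by
        rw [hexp, inv_rpow (by positivity), mul_rpow (by norm_num) (by positivity)]
        field_simp
end
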